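/- arXiv:2007.13121 — 12 statements merged into one kernel-verified Lean document; each statement's English description precedes it below -/
import Mathlib

section
/- If S̃ ⊆ {1,…,n} satisfies P(M(S̃) ≤ v) ≤ (1+ε²)·p̃_v + ε² for every v ∈ V_critical, and moreover ℰ ≤ E[M(S*)], then E[M(S̃)] ≥ (1 − 23ε)·E[M(S*)]. -/
open MeasureTheory ProbabilityTheory

/-!
On the grid `V` of mesh `c = εℰ`, the layer-cake formula gives
`E[M(S)] = ∑_{j < 1/ε²} c · (1 - P(M(S) ≤ j c))`. At every grid point the CDF of `M(S̃)` exceeds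
that of `M(S*)` by at most `6ε²`: on `V_critical` by the `2ε²`-accuracy of `p̃`, and off it
because there `P(M(S*) ≤ v) ≥ 1 - ε²` already. Summing over the `1/ε²` grid points costs at
most `6εℰ ≤ 6ε E[M(S*)]`.
-/

/-- `maxVal X S ω = max_{i ∈ S} X i ω`, with value `0` for `S = ∅`. -/
noncomputable def maxVal {Ω : Type*} {n : ℕ} (X : Fin n → Ω → ℝ)
    (S : Finset (Fin n)) (ω : Ω) : ℝ :=
  (insert (0 : ℝ) (S.image fun i => X i ω)).max' (Finset.insert_nonempty _ _)

/-- The CDF of the maximum: `cdfMax μ X S v = P(max_{i ∈ S} X i ≤ v)`. -/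
noncomputable def cdfMax {Ω : Type*} [MeasurableSpace Ω] (μ : MeasureTheory.Measure Ω)
    {n : ℕ} (X : Fin n → Ω → ℝ) (S : Finset (Fin n)) (v : ℝ) : ℝ :=
  (μ {ω | maxVal X S ω ≤ v}).toReal

open Finset

theorem integral_eq_sum_measureReal_lt_of_mem_grid {Ω : Type*} [MeasurableSpace Ω]
    {μ : Measure Ω} [IsFiniteMeasure μ] {f : Ω → ℝ} (hf : Measurable f) {c : ℝ} (hc : 0 < c)
    {N : ℕ} (hgrid : ∀ ω, ∃ k ≤ N, f ω = k * c) :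
    ∫ ω, f ω ∂μ = ∑ j ∈ range N, c * μ.real {ω | j * c < f ω} := by
  have hmeas (j : ℕ) : MeasurableSet {ω | j * c < f ω} := measurableSet_lt measurable_const hf
  have hpoint (ω : Ω) : f ω = ∑ j ∈ range N, {ω | j * c < f ω}.indicator (fun _ => c) ω := by
    obtain ⟨k, hk, hfk⟩ := hgrid ω
    have hlt (j : ℕ) : ω ∈ {ω | j * c < f ω} ↔ j < k := by
      rw [Set.mem_ofPred_eq, hfk, mul_lt_mul_iff_left₀ hc, Nat.cast_lt]
    rw [← sum_range_add_sum_Ico _ hk,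
      sum_congr rfl fun j hj => Set.indicator_of_mem ((hlt j).2 (mem_range.1 hj)) _,
      sum_congr rfl fun j hj => Set.indicator_of_notMem (by simp_all [hlt j]) _]
    simp [hfk]
  rw [integral_congr_ae (Filter.Eventually.of_forall hpoint),
    integral_finsetSum _ fun j _ => (integrable_const c).indicator (hmeas j)]
  exact sum_congr rfl fun j _ => by rw [integral_indicator_const _ (hmeas j), smul_eq_mul, mul_comm]

section maxVal

variable {Ω : Type*} {n : ℕ} (X : Fin n → Ω → ℝ) (S : Finset (Fin n))

theorem maxVal_nonneg (ω : Ω) : 0 ≤ maxVal X S ω :=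
  le_max' _ _ (mem_insert_self _ _)

theorem maxVal_le_iff {ω : Ω} {b : ℝ} (hb : 0 ≤ b) : maxVal X S ω ≤ b ↔ ∀ i ∈ S, X i ω ≤ b := by
  simp [maxVal, max'_le_iff, hb]

theorem maxVal_mem_grid {c : ℝ} {N : ℕ}
    (hX : ∀ i ω, X i ω ∈ (range (N + 1)).image fun j : ℕ => (j : ℝ) * c) (ω : Ω) :
    ∃ k ≤ N, maxVal X S ω = k * c := by
  have hmem : maxVal X S ω ∈ insert 0 (S.image fun i => X i ω) := max'_mem _ _
  rcases mem_insert.1 hmem with h0 | hmem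
  · exact ⟨0, N.zero_le, by simpa using h0⟩
  · obtain ⟨i, -, hi⟩ := mem_image.1 hmem
    obtain ⟨k, hk, hXk⟩ := mem_image.1 (hX i ω)
    exact ⟨k, Nat.lt_succ_iff.1 (mem_range.1 hk), (hXk.trans hi).symm⟩

variable [MeasurableSpace Ω]

theorem measurable_maxVal (hX : ∀ i, Measurable (X i)) : Measurable (maxVal X S) := by
  refine measurable_of_Iic fun b => ?_
  rcases lt_or_ge b 0 with hb | hb
  · convert MeasurableSet.empty
    exact Set.eq_empty_of_forall_notMem fun ω hω => hb.not_ge ((maxVal_nonneg X S ω).trans hω)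
  · have : maxVal X S ⁻¹' Set.Iic b = ⋂ i ∈ S, {ω | X i ω ≤ b} := by
      ext ω; simp [maxVal_le_iff X S hb]
    rw [this]
    exact .biInter S.countable_toSet fun i _ => measurableSet_le (hX i) measurable_const

theorem measureReal_lt_maxVal (μ : Measure Ω) [IsProbabilityMeasure μ]
    (hX : ∀ i, Measurable (X i)) (v : ℝ) :
    μ.real {ω | v < maxVal X S ω} = 1 - cdfMax μ X S v := by
  have hle : MeasurableSet {ω | maxVal X S ω ≤ v} :=
    measurableSet_le (measurable_maxVal X S hX) measurable_const
  rw [cdfMax, ← measureReal_def, ← probReal_compl_eq_one_sub hle, Set.compl_ofPred]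
  simp only [not_le]

theorem cdfMax_le_one (μ : Measure Ω) [IsProbabilityMeasure μ] (v : ℝ) : cdfMax μ X S v ≤ 1 :=
  measureReal_le_one

end maxVal

theorem le_add_six_sq_of_le_one_add_sq_mul {ε f g q : ℝ} (hε : ε ∈ Set.Ioo 0 1) (hf : f ≤ 1)
    (hq : q < f + 2 * ε ^ 2) (hg : g ≤ (1 + ε ^ 2) * q + ε ^ 2) : g ≤ f + 6 * ε ^ 2 := by
  obtain ⟨hε0, hε1⟩ := hε
  have hε2 : ε ^ 2 ≤ 1 := pow_le_one₀ hε0.le hε1.le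
  nlinarith [mul_le_mul_of_nonneg_left hq.le (by positivity : (0 : ℝ) ≤ 1 + ε ^ 2)]

theorem one_sub_le_of_notMem_critical {V Vcrit : Finset ℝ} {F : ℝ → ℝ} {δ vheavy : ℝ}
    (hheavy : (∃ v ∈ V, F v < 1 - δ) →
      vheavy ∈ V ∧ F vheavy < 1 - δ ∧ (∀ v ∈ V, F v < 1 - δ → v ≤ vheavy) ∧
      Vcrit = V.filter fun v => v ≤ vheavy)
    (hnoheavy : (¬ ∃ v ∈ V, F v < 1 - δ) → Vcrit = V) {v : ℝ} (hv : v ∈ V) (hcrit : v ∉ Vcrit) :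
    1 - δ ≤ F v := by
  by_contra! hlt
  obtain ⟨-, -, hmax, rfl⟩ := hheavy ⟨v, hv, hlt⟩
  exact hcrit (mem_filter.2 ⟨hv, hmax v hv hlt⟩)

theorem sum_mul_one_sub_sub_le {N : ℕ} {c δ : ℝ} (hc : 0 ≤ c) {F G : ℕ → ℝ}
    (hFG : ∀ j < N, G j ≤ F j + δ) :
    ∑ j ∈ range N, c * (1 - F j) - N * (c * δ) ≤ ∑ j ∈ range N, c * (1 - G j) := by
  have hsum := sum_le_sum fun j hj =>
    (by linarith [mul_le_mul_of_nonneg_left (hFG j (mem_range.1 hj)) hc] :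
      c * (1 - F j) - c * δ ≤ c * (1 - G j))
  rwa [sum_sub_distrib, sum_const, card_range, nsmul_eq_mul] at hsum

theorem nonadaptive_probemax_cdf_equivalent_suffices_general
    {Ω : Type*} [MeasurableSpace Ω] (μ : Measure Ω) [IsProbabilityMeasure μ]
    (n : ℕ) (ε Escale : ℝ) (mε : ℕ)
    (hε : ε ∈ Set.Ioo (0 : ℝ) 1) (hεint : ε * (mε : ℝ) = 1) (hE : 0 < Escale)
    (V : Finset ℝ)
    (hV : V = (Finset.range (mε ^ 2 + 1)).image fun j : ℕ => (j : ℝ) * ε * Escale)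
    (X : Fin n → Ω → ℝ)
    (hmeas : ∀ i, Measurable (X i))
    (hval : ∀ i ω, X i ω ∈ V)
    (Sstar Stilde : Finset (Fin n))
    (vheavy : ℝ) (Vcrit : Finset ℝ)
    (hheavy : (∃ v ∈ V, cdfMax μ X Sstar v < 1 - ε ^ 2) →
      vheavy ∈ V ∧ cdfMax μ X Sstar vheavy < 1 - ε ^ 2 ∧
      (∀ v ∈ V, cdfMax μ X Sstar v < 1 - ε ^ 2 → v ≤ vheavy) ∧
      Vcrit = V.filter fun v => v ≤ vheavy)
    (hnoheavy : (¬ ∃ v ∈ V, cdfMax μ X Sstar v < 1 - ε ^ 2) → Vcrit = V)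
    (p : ℝ → ℝ)
    (hp : ∀ v ∈ Vcrit,
      cdfMax μ X Sstar v ≤ p v ∧ p v < cdfMax μ X Sstar v + 2 * ε ^ 2)
    (hcdfeq : ∀ v ∈ Vcrit, cdfMax μ X Stilde v ≤ (1 + ε ^ 2) * p v + ε ^ 2)
    (hElow : Escale ≤ ∫ ω, maxVal X Sstar ω ∂μ) :
    (1 - 23 * ε) * ∫ ω, maxVal X Sstar ω ∂μ ≤ ∫ ω, maxVal X Stilde ω ∂μ := by
  set c := ε * Escale
  have hc : 0 < c := mul_pos hε.1 hE
  have hV' : V = (range (mε ^ 2 + 1)).image fun j : ℕ => (j : ℝ) * c := by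
    simp_rw [hV, c, mul_assoc]
  have hexp (S : Finset (Fin n)) :
      ∫ ω, maxVal X S ω ∂μ = ∑ j ∈ range (mε ^ 2), c * (1 - cdfMax μ X S (j * c)) := by
    simp_rw [integral_eq_sum_measureReal_lt_of_mem_grid (measurable_maxVal X S hmeas) hc
      (maxVal_mem_grid X S fun i ω => hV' ▸ hval i ω), measureReal_lt_maxVal X S μ hmeas]
  have hcdf (v : ℝ) (hv : v ∈ V) : cdfMax μ X Stilde v ≤ cdfMax μ X Sstar v + 6 * ε ^ 2 := by
    by_cases hcrit : v ∈ Vcrit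
    · exact le_add_six_sq_of_le_one_add_sq_mul hε (cdfMax_le_one X Sstar μ v) (hp v hcrit).2
        (hcdfeq v hcrit)
    · have := one_sub_le_of_notMem_critical hheavy hnoheavy hv hcrit
      linarith [cdfMax_le_one X Stilde μ v, sq_nonneg ε]
  have hgap : ∫ ω, maxVal X Sstar ω ∂μ - 6 * ε * Escale ≤ ∫ ω, maxVal X Stilde ω ∂μ := by
    have hcount : (mε ^ 2 : ℕ) * (c * (6 * ε ^ 2)) = 6 * ε * Escale := by
      push_cast
      linear_combination (6 * ε * Escale * (ε * mε + 1)) * hεint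
    rw [hexp, hexp, ← hcount]
    exact sum_mul_one_sub_sub_le hc.le fun j hj =>
      hcdf _ (hV' ▸ mem_image_of_mem _ (mem_range.2 (Nat.lt_succ_of_lt hj)))
  nlinarith [mul_le_mul_of_nonneg_left hElow hε.1.le, mul_pos hε.1 hE]

/-- **Lemma 3.1, non-adaptive ProbeMax.**  Fix `ε ∈ (0,1)` with `1/ε` a
positive integer, `ℰ > 0`, and the support `V = {0, εℰ, …, ℰ/ε}`.  Let `X₁,…,Xₙ` be
independent `V`-valued random variables, `S*` a fixed subset, `v_heavy` the maximal
`v ∈ V` with `P(M(S*) ≤ v) < 1 − ε²` (with `V_critical = {v ∈ V : v ≤ v_heavy}`, and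
`V_critical = V` if no such `v` exists), and `p̃` over-estimates of the CDF of `M(S*)`
on `V_critical` within `2ε²`.  If `S̃` satisfies
`P(M(S̃) ≤ v) ≤ (1+ε²)·p̃_v + ε²` for all `v ∈ V_critical`, and `ℰ ≤ E[M(S*)]`, then
`E[M(S̃)] ≥ (1 − 23ε)·E[M(S*)]`. -/
theorem nonadaptive_probemax_cdf_equivalent_suffices
    {Ω : Type*} [MeasurableSpace Ω] (μ : Measure Ω) [IsProbabilityMeasure μ]
    (n : ℕ) (ε Escale : ℝ) (mε : ℕ) (hmε : 0 < mε)
    (hε : ε ∈ Set.Ioo (0 : ℝ) 1) (hεint : ε * (mε : ℝ) = 1) (hE : 0 < Escale)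
    (V : Finset ℝ)
    (hV : V = (Finset.range (mε ^ 2 + 1)).image fun j : ℕ => (j : ℝ) * ε * Escale)
    (X : Fin n → Ω → ℝ)
    (hmeas : ∀ i, Measurable (X i))
    (hval : ∀ i ω, X i ω ∈ V)
    (hindep : iIndepFun X μ)
    (Sstar Stilde : Finset (Fin n))
    (vheavy : ℝ) (Vcrit : Finset ℝ)
    (hheavy : (∃ v ∈ V, cdfMax μ X Sstar v < 1 - ε ^ 2) →
      vheavy ∈ V ∧ cdfMax μ X Sstar vheavy < 1 - ε ^ 2 ∧
      (∀ v ∈ V, cdfMax μ X Sstar v < 1 - ε ^ 2 → v ≤ vheavy) ∧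
      Vcrit = V.filter fun v => v ≤ vheavy)
    (hnoheavy : (¬ ∃ v ∈ V, cdfMax μ X Sstar v < 1 - ε ^ 2) → Vcrit = V)
    (p : ℝ → ℝ)
    (hp : ∀ v ∈ Vcrit,
      cdfMax μ X Sstar v ≤ p v ∧ p v < cdfMax μ X Sstar v + 2 * ε ^ 2)
    (hcdfeq : ∀ v ∈ Vcrit, cdfMax μ X Stilde v ≤ (1 + ε ^ 2) * p v + ε ^ 2)
    (hElow : Escale ≤ ∫ ω, maxVal X Sstar ω ∂μ) :
    (1 - 23 * ε) * ∫ ω, maxVal X Sstar ω ∂μ ≤ ∫ ω, maxVal X Stilde ω ∂μ :=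
  nonadaptive_probemax_cdf_equivalent_suffices_general μ n ε Escale mε hε hεint hE V hV X hmeas hval
    Sstar Stilde vheavy Vcrit hheavy hnoheavy p hp hcdfeq hElow
end

section
/- For every ε ∈ (0,1) and every real number p with 2ε² ≤ p ≤ 1 − ε², one has ln(1/(p − ε²)) ≤ (1/ε⁴)·ln(1/p). -/
/-! Write `a = ε²` and `L = log (1/p)`. Since `p ≤ 1 - a`, `L ≥ 1 - p ≥ a`; since `p - a ≥ a`,
`log (1/(p - a)) = L + log (p/(p - a)) ≤ L + a/(p - a) ≤ L + 1`. Finally `L + 1 ≤ L/a²` as soon as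
`L ≥ a` and `a + a² ≤ 1`, which holds because `a ≤ 1/3`. -/

namespace Real

lemma le_neg_log_of_le_one_sub {a p : ℝ} (hp : 0 < p) (h : p ≤ 1 - a) : a ≤ -log p := by
  linarith [log_le_sub_one_of_pos hp]

lemma neg_log_sub_le_neg_log_add_one {a p : ℝ} (ha : 0 < a) (h : 2 * a ≤ p) :
    -log (p - a) ≤ -log p + 1 := by
  have hpa : 0 < p - a := by linarith
  have hp : 0 < p := by linarith
  have hlog : 1 - p / (p - a) ≤ log (p - a) - log p := by
    simpa [log_div hpa.ne' hp.ne'] using one_sub_inv_le_log_of_pos (div_pos hpa hp)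
  have hratio : p / (p - a) ≤ 2 := by
    rw [div_le_iff₀ hpa]; linarith
  linarith

end Real

lemma add_one_le_div_sq {a L : ℝ} (ha : 0 < a) (ha1 : a + a ^ 2 ≤ 1) (hL : a ≤ L) :
    L + 1 ≤ L / a ^ 2 := by
  rw [le_div_iff₀ (by positivity)]
  nlinarith [mul_le_mul_of_nonneg_right hL (by nlinarith : (0 : ℝ) ≤ 1 - a ^ 2)]

theorem probemax_log_feasibility_bound_general (ε p : ℝ) (hε0 : 0 < ε)
    (hp1 : 2 * ε ^ 2 ≤ p) (hp2 : p ≤ 1 - ε ^ 2) :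
    Real.log (1 / (p - ε ^ 2)) ≤ (1 / ε ^ 4) * Real.log (1 / p) := by
  set a := ε ^ 2
  have ha : 0 < a := by positivity
  have hp : 0 < p := by linarith
  have hL : a ≤ -Real.log p := Real.le_neg_log_of_le_one_sub hp hp2
  have hε4 : ε ^ 4 = a ^ 2 := by ring
  simp only [one_div, Real.log_inv, hε4]
  calc -Real.log (p - a) ≤ -Real.log p + 1 := Real.neg_log_sub_le_neg_log_add_one ha hp1
    _ ≤ -Real.log p / a ^ 2 := add_one_le_div_sq ha (by nlinarith) hL
    _ = (a ^ 2)⁻¹ * -Real.log p := by ring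

/-- For every `ε ∈ (0,1)` and every real `p` with
`2ε² ≤ p ≤ 1 − ε²`, one has `ln(1/(p − ε²)) ≤ (1/ε⁴) · ln(1/p)`. -/
theorem probemax_log_feasibility_bound (ε p : ℝ) (hε0 : 0 < ε) (hε1 : ε < 1)
    (hp1 : 2 * ε ^ 2 ≤ p) (hp2 : p ≤ 1 - ε ^ 2) :
    Real.log (1 / (p - ε ^ 2)) ≤ (1 / ε ^ 4) * Real.log (1 / p) :=
  probemax_log_feasibility_bound_general ε p hε0 hp1 hp2
end

section
/- For every ε ∈ (0,1) and every real number p with 0 ≤ p ≤ 1, one has p^{1 − ε³/6} ≤ (1 + ε²)·p + ε². -/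
/-!
By concavity of `x ↦ x ^ (1 - δ)` (Bernoulli's inequality), `p ^ (1 - δ) ≤ (1 - δ) p + δ` for all
`p ≥ 0`; with `δ = ε³/6 ≤ ε²` the right-hand side is at most `(1 + ε²) p + ε²`.
-/

theorem Real.rpow_one_sub_le_one_sub_mul_add {p δ : ℝ} (hp : 0 ≤ p) (hδ0 : 0 ≤ δ) (hδ1 : δ ≤ 1) :
    p ^ (1 - δ) ≤ (1 - δ) * p + δ := by
  have h := rpow_one_add_le_one_add_mul_self (s := p - 1) (by linarith) (sub_nonneg.2 hδ1)
    (by linarith)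
  rw [add_sub_cancel] at h
  linarith

theorem probemax_rpow_cdf_bound_general (ε p : ℝ) (hε0 : 0 < ε) (hε1 : ε < 1)
    (hp0 : 0 ≤ p) :
    p ^ (1 - ε ^ 3 / 6) ≤ (1 + ε ^ 2) * p + ε ^ 2 := by
  have hε2 : 0 < ε ^ 2 := by positivity
  have hδ0 : 0 ≤ ε ^ 3 / 6 := by positivity
  have hδε : ε ^ 3 / 6 ≤ ε ^ 2 := by nlinarith
  calc p ^ (1 - ε ^ 3 / 6) ≤ (1 - ε ^ 3 / 6) * p + ε ^ 3 / 6 :=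
        Real.rpow_one_sub_le_one_sub_mul_add hp0 hδ0 (by nlinarith)
    _ ≤ (1 + ε ^ 2) * p + ε ^ 2 := by nlinarith

/-- For every `ε ∈ (0,1)` and every real `p ∈ [0,1]`,
`p ^ (1 − ε³/6) ≤ (1 + ε²)·p + ε²`.  (Here `^` is the real power `Real.rpow`,
so for `p = 0` the left-hand side is `0`.) -/
theorem probemax_rpow_cdf_bound (ε p : ℝ) (hε0 : 0 < ε) (hε1 : ε < 1)
    (hp0 : 0 ≤ p) (hp1 : p ≤ 1) :
    p ^ (1 - ε ^ 3 / 6) ≤ (1 + ε ^ 2) * p + ε ^ 2 :=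
  probemax_rpow_cdf_bound_general ε p hε0 hε1 hp0
end

section
/- Suppose that for every v ∈ V_critical, p̃_v ∈ {2ε², 3ε², …, 1 − ε²}, and that ξ ∈ {0,1}ⁿ satisfies ∑_{i=1}^n ℓ_{iv} ξ_i ≥ (1 − ε³/6)·ln(1/p̃_v) for every v ∈ V_critical (the sum taken as ∞ if any term with ξ_i = 1 is infinite). Then the set S̃ = {i : ξ_i = 1} satisfies P(M(S̃) ≤ v) ≤ (1 + ε²)·p̃_v + ε² for every v ∈ V_critical. -/
open MeasureTheory ProbabilityTheory
open scoped ENNReal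

/-- The load `ℓ_{iv} = ln(1/P(Xᵢ ≤ v)) ∈ [0,∞]`, with `ℓ_{iv} = ∞` when `P(Xᵢ ≤ v) = 0`. -/
noncomputable def load {Ω : Type*} [MeasurableSpace Ω] (μ : MeasureTheory.Measure Ω)
    {n : ℕ} (X : Fin n → Ω → ℝ) (i : Fin n) (v : ℝ) : ℝ≥0∞ :=
  if μ {ω | X i ω ≤ v} = 0 then ⊤
  else ENNReal.ofReal (Real.log (1 / (μ {ω | X i ω ≤ v}).toReal))

/-! Independence bounds `P(M(S̃) ≤ v)` by `∏_{i ∈ S̃} P(Xᵢ ≤ v) = exp(-∑_{i ∈ S̃} ℓ_{iv})`,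
which the covering constraint bounds by `p̃_v ^ (1 - ε³/6)`. Since `p̃_v ≥ ε²`, we have
`ln(1/p̃_v) ≤ 2/ε`, so the factor lost, `p̃_v ^ (-ε³/6) ≤ exp(ε²/3)`, is at most `1 + ε²`. -/

open Real

lemma Finset.sum_natCast_mul_eq_sum_filter_eq_one {ι R : Type*} [Fintype ι] [Semiring R]
    {ξ : ι → ℕ} (hξ : ∀ i, ξ i = 0 ∨ ξ i = 1) (f : ι → R) :
    ∑ i, (ξ i : R) * f i = ∑ i ∈ Finset.univ.filter (fun i => ξ i = 1), f i := by
  rw [Finset.sum_filter]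
  refine Finset.sum_congr rfl fun i _ => ?_
  rcases hξ i with h | h <;> simp [h]

lemma Real.prod_le_rpow_of_le_sum_log_inv {ι : Type*} {S : Finset ι} {q : ι → ℝ} {p c : ℝ}
    (hq : ∀ i ∈ S, 0 < q i) (hp : 0 < p)
    (h : c * log (1 / p) ≤ ∑ i ∈ S, log (1 / q i)) :
    ∏ i ∈ S, q i ≤ p ^ c := by
  have hlog : log (∏ i ∈ S, q i) = -∑ i ∈ S, log (1 / q i) := by
    simp only [log_prod fun i hi => (hq i hi).ne', one_div, log_inv, Finset.sum_neg_distrib,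
      neg_neg]
  rw [one_div, log_inv] at h
  rw [← exp_log (Finset.prod_pos hq), rpow_def_of_pos hp, hlog]
  exact exp_le_exp.mpr (by linarith)

lemma Real.rpow_one_sub_le_one_add_sq_mul {ε q : ℝ} (hε0 : 0 < ε) (hε1 : ε ≤ 1) (hq : ε ^ 2 ≤ q) :
    q ^ (1 - ε ^ 3 / 6) ≤ (1 + ε ^ 2) * q := by
  have hq0 : 0 < q := (pow_pos hε0 2).trans_le hq
  have hlog_q : -log q ≤ 2 / ε := calc
    -log q ≤ -log (ε ^ 2) := neg_le_neg (log_le_log (pow_pos hε0 2) hq)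
    _ = 2 * log ε⁻¹ := by rw [log_pow, log_inv]; push_cast; ring
    _ ≤ 2 * (ε⁻¹ - 1) := by gcongr; exact log_le_sub_one_of_pos (inv_pos.mpr hε0)
    _ ≤ 2 / ε := by rw [div_eq_mul_inv]; linarith
  have hlog_one_add : ε ^ 2 / 3 ≤ log (1 + ε ^ 2) := by
    have hinv : (1 + ε ^ 2)⁻¹ ≤ 1 - ε ^ 2 / 3 := by
      rw [inv_eq_one_div, div_le_iff₀ (by positivity)]
      nlinarith [pow_le_one₀ hε0.le hε1 (n := 2), sq_nonneg ε]
    linarith [one_sub_inv_le_log_of_pos (by positivity : (0 : ℝ) < 1 + ε ^ 2)]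
  have hexponent : ε ^ 3 / 6 * -log q ≤ log (1 + ε ^ 2) := calc
    ε ^ 3 / 6 * -log q ≤ ε ^ 3 / 6 * (2 / ε) := by gcongr
    _ = ε ^ 2 / 3 := by field_simp; ring
    _ ≤ log (1 + ε ^ 2) := hlog_one_add
  rw [rpow_def_of_pos hq0, ← exp_log (by positivity : 0 < (1 + ε ^ 2) * q),
    log_mul (by positivity) hq0.ne']
  exact exp_le_exp.mpr (by linarith)

lemma le_maxVal {Ω : Type*} {n : ℕ} {X : Fin n → Ω → ℝ} {S : Finset (Fin n)} {i : Fin n}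
    (hi : i ∈ S) (ω : Ω) :
    X i ω ≤ maxVal X S ω :=
  Finset.le_max' (insert 0 (S.image fun i => X i ω)) (X i ω)
    (Finset.mem_insert_of_mem (Finset.mem_image_of_mem _ hi))

section

variable {Ω : Type*} [MeasurableSpace Ω] {μ : Measure Ω} {n : ℕ} {X : Fin n → Ω → ℝ}

lemma cdfMax_le_prod_measureReal [IsFiniteMeasure μ] (hindep : iIndepFun X μ)
    (S : Finset (Fin n)) (v : ℝ) :
    cdfMax μ X S v ≤ ∏ i ∈ S, μ.real {ω | X i ω ≤ v} := by
  have hsub : {ω | maxVal X S ω ≤ v} ⊆ ⋂ i ∈ S, {ω | X i ω ≤ v} := fun ω hω =>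
    Set.mem_iInter₂.mpr fun i hi => (le_maxVal hi ω).trans hω
  calc cdfMax μ X S v ≤ μ.real (⋂ i ∈ S, {ω | X i ω ≤ v}) := measureReal_mono hsub
    _ = ∏ i ∈ S, μ.real {ω | X i ω ≤ v} := by
      rw [measureReal_def, hindep.meas_biInter (s := fun i => {ω | X i ω ≤ v})
        fun i _ => ⟨Set.Iic v, measurableSet_Iic, rfl⟩, ENNReal.toReal_prod]
      rfl

lemma load_eq_ofReal_log_inv {i : Fin n} {v : ℝ} (h : μ {ω | X i ω ≤ v} ≠ 0) :
    load μ X i v = ENNReal.ofReal (log (1 / μ.real {ω | X i ω ≤ v})) :=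
  if_neg h

lemma prod_measureReal_le_rpow_of_le_sum_load [IsProbabilityMeasure μ] {S : Finset (Fin n)}
    {v p c : ℝ} (hp : 0 < p) (h : ENNReal.ofReal (c * log (1 / p)) ≤ ∑ i ∈ S, load μ X i v) :
    ∏ i ∈ S, μ.real {ω | X i ω ≤ v} ≤ p ^ c := by
  by_cases hzero : ∃ i ∈ S, μ {ω | X i ω ≤ v} = 0
  · obtain ⟨i, hi, h0⟩ := hzero
    rw [Finset.prod_eq_zero hi (by rw [measureReal_def, h0, ENNReal.toReal_zero])]
    exact rpow_nonneg hp.le c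
  push Not at hzero
  have hpos : ∀ i ∈ S, 0 < μ.real {ω | X i ω ≤ v} := fun i hi =>
    ENNReal.toReal_pos (hzero i hi) (measure_ne_top μ _)
  have hlog_nonneg : ∀ i ∈ S, 0 ≤ log (1 / μ.real {ω | X i ω ≤ v}) := fun i hi =>
    log_nonneg (one_le_one_div (hpos i hi) measureReal_le_one)
  rw [Finset.sum_congr rfl fun i hi => load_eq_ofReal_log_inv (hzero i hi),
    ← ENNReal.ofReal_sum_of_nonneg hlog_nonneg,
    ENNReal.ofReal_le_ofReal_iff (Finset.sum_nonneg hlog_nonneg)] at h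
  exact prod_le_rpow_of_le_sum_log_inv hpos hp h

end

theorem nonadaptive_probemax_rounded_is_cdf_equivalent_general
    {Ω : Type*} [MeasurableSpace Ω] (μ : Measure Ω) [IsProbabilityMeasure μ]
    (n : ℕ) (ε : ℝ)
    (hε : ε ∈ Set.Ioo (0 : ℝ) 1)
    (X : Fin n → Ω → ℝ)
    (hindep : iIndepFun X μ)
    (Vcrit : Finset ℝ)
    (p : ℝ → ℝ)
    (hprange : ∀ v ∈ Vcrit, ∃ j : ℕ, 2 ≤ j ∧ p v = (j : ℝ) * ε ^ 2 ∧ p v ≤ 1 - ε ^ 2)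
    (ξ : Fin n → ℕ) (hξ : ∀ i, ξ i = 0 ∨ ξ i = 1)
    (hcover : ∀ v ∈ Vcrit,
      ENNReal.ofReal ((1 - ε ^ 3 / 6) * Real.log (1 / p v))
        ≤ ∑ i : Fin n, (ξ i : ℝ≥0∞) * load μ X i v)
    (Stilde : Finset (Fin n))
    (hStilde : Stilde = Finset.univ.filter fun i => ξ i = 1) :
    ∀ v ∈ Vcrit, cdfMax μ X Stilde v ≤ (1 + ε ^ 2) * p v + ε ^ 2 := by
  intro v hv
  obtain ⟨j, hj, hpj, -⟩ := hprange v hv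
  have hp : ε ^ 2 ≤ p v :=
    hpj ▸ le_mul_of_one_le_left (sq_nonneg ε) (by exact_mod_cast (by omega : 1 ≤ j))
  have hcover_S :
      ENNReal.ofReal ((1 - ε ^ 3 / 6) * log (1 / p v)) ≤ ∑ i ∈ Stilde, load μ X i v := by
    rw [hStilde, ← Finset.sum_natCast_mul_eq_sum_filter_eq_one hξ]
    exact hcover v hv
  calc cdfMax μ X Stilde v ≤ ∏ i ∈ Stilde, μ.real {ω | X i ω ≤ v} :=
        cdfMax_le_prod_measureReal hindep Stilde v
    _ ≤ p v ^ (1 - ε ^ 3 / 6) :=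
        prod_measureReal_le_rpow_of_le_sum_load ((pow_pos hε.1 2).trans_le hp) hcover_S
    _ ≤ (1 + ε ^ 2) * p v := rpow_one_sub_le_one_add_sq_mul hε.1 hε.2.le hp
    _ ≤ (1 + ε ^ 2) * p v + ε ^ 2 := le_add_of_nonneg_right (sq_nonneg ε)

/-- **non-adaptive ProbeMax: approximate covering implies
CDF-equivalence.**  Suppose for every `v ∈ V_critical`,
`p̃_v ∈ {2ε², 3ε², …, 1 − ε²}`, and `ξ ∈ {0,1}ⁿ` satisfies
`∑ᵢ ℓ_{iv} ξᵢ ≥ (1 − ε³/6)·ln(1/p̃_v)` (the sum in `[0,∞]`).  Then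
`S̃ = {i : ξᵢ = 1}` satisfies `P(M(S̃) ≤ v) ≤ (1 + ε²)·p̃_v + ε²` for every
`v ∈ V_critical`. -/
theorem nonadaptive_probemax_rounded_is_cdf_equivalent
    {Ω : Type*} [MeasurableSpace Ω] (μ : Measure Ω) [IsProbabilityMeasure μ]
    (n : ℕ) (ε Escale : ℝ) (mε : ℕ) (hmε : 0 < mε)
    (hε : ε ∈ Set.Ioo (0 : ℝ) 1) (hεint : ε * (mε : ℝ) = 1) (hE : 0 < Escale)
    (V : Finset ℝ)
    (hV : V = (Finset.range (mε ^ 2 + 1)).image fun j : ℕ => (j : ℝ) * ε * Escale)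
    (X : Fin n → Ω → ℝ)
    (hmeas : ∀ i, Measurable (X i))
    (hval : ∀ i ω, X i ω ∈ V)
    (hindep : iIndepFun X μ)
    (Vcrit : Finset ℝ) (hVcrit : Vcrit ⊆ V)
    (p : ℝ → ℝ)
    (hprange : ∀ v ∈ Vcrit, ∃ j : ℕ, 2 ≤ j ∧ p v = (j : ℝ) * ε ^ 2 ∧ p v ≤ 1 - ε ^ 2)
    (ξ : Fin n → ℕ) (hξ : ∀ i, ξ i = 0 ∨ ξ i = 1)
    (hcover : ∀ v ∈ Vcrit,
      ENNReal.ofReal ((1 - ε ^ 3 / 6) * Real.log (1 / p v))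
        ≤ ∑ i : Fin n, (ξ i : ℝ≥0∞) * load μ X i v)
    (Stilde : Finset (Fin n))
    (hStilde : Stilde = Finset.univ.filter fun i => ξ i = 1) :
    ∀ v ∈ Vcrit, cdfMax μ X Stilde v ≤ (1 + ε ^ 2) * p v + ε ^ 2 :=
  nonadaptive_probemax_rounded_is_cdf_equivalent_general μ n ε hε X hindep Vcrit p hprange ξ hξ
    hcover Stilde hStilde
end

section
/- Let ε > 0 and δ > 0. Let T₁,…,T_N be pairwise disjoint finite sets of jobs, and for each t ∈ {1,…,N} let qₜ ≥ 1 be an integer such that the load ℓ_j of every job j ∈ Tₜ satisfies (1+ε)^{qₜ−1}·δ < ℓ_j ≤ (1+ε)^{qₜ}·δ. Let x̂_j ∈ {0,1} and y_j ∈ [0,1] be numbers with ∑_{j∈Tₜ} y_j = ∑_{j∈Tₜ} x̂_j =: k̂ₜ (an integer) for every t, and let Y_j ∈ {0,1} satisfy ∑_{j∈Tₜ} Y_j ≥ ⌊∑_{j∈Tₜ} y_j⌋ for every t. Then ∑_{t=1}^N ∑_{j∈Tₜ} ℓ_j Y_j ≥ (1/(1+ε))·∑_{t=1}^N ∑_{j∈Tₜ}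 ℓ_j x̂_j ≥ (1−ε)·∑_{t=1}^N ∑_{j∈Tₜ} ℓ_j x̂_j. -/
/-!
Within a job type, all loads lie in one band `(a, (1+ε)a]`, so the total load of any selection is
pinned down by its cardinality up to the factor `1+ε`. The rounded solution `Y` selects at least
`⌊k̂ₜ⌋ = k̂ₜ` jobs of type `t`, as many as `x̂` does, so type by type it loses at most the factor
`1+ε`; summing over the types gives the first inequality, and `(1-ε)(1+ε) = 1-ε² ≤ 1` the second.
-/

open Finset

theorem Finset.sum_mul_le_mul_sum_mul_of_mem_Icc {ι R : Type*} [CommSemiring R] [PartialOrder R]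
    [IsOrderedRing R] {s : Finset ι} {ℓ x Y : ι → R} {a r : R} (ha : 0 ≤ a) (hr : 0 ≤ r)
    (hℓ : ∀ j ∈ s, ℓ j ∈ Set.Icc a (r * a)) (hx : ∀ j ∈ s, 0 ≤ x j) (hY : ∀ j ∈ s, 0 ≤ Y j)
    (hxY : ∑ j ∈ s, x j ≤ ∑ j ∈ s, Y j) :
    ∑ j ∈ s, ℓ j * x j ≤ r * ∑ j ∈ s, ℓ j * Y j :=
  calc ∑ j ∈ s, ℓ j * x j
      ≤ ∑ j ∈ s, r * a * x j :=
        sum_le_sum fun j hj => mul_le_mul_of_nonneg_right (hℓ j hj).2 (hx j hj)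
    _ = r * (a * ∑ j ∈ s, x j) := by rw [← mul_sum, mul_assoc]
    _ ≤ r * (a * ∑ j ∈ s, Y j) := by gcongr
    _ = r * ∑ j ∈ s, a * Y j := by rw [mul_sum]
    _ ≤ r * ∑ j ∈ s, ℓ j * Y j :=
      mul_le_mul_of_nonneg_left (sum_le_sum fun j hj => mul_le_mul_of_nonneg_right (hℓ j hj).1 (hY j hj)) hr

theorem one_sub_le_one_div_one_add {ε : ℝ} (hε : -1 < ε) : 1 - ε ≤ 1 / (1 + ε) := by
  rw [le_div_iff₀ (by linarith)]
  nlinarith [sq_nonneg ε]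

theorem santa_claus_heavy_types_bound_general {J : Type*}
    (ε δ : ℝ) (hε : 0 < ε) (hδ : 0 < δ)
    (N : ℕ) (T : Fin N → Finset J)
    (q : Fin N → ℕ) (hq : ∀ t, 1 ≤ q t)
    (ℓ : J → ℝ)
    (hℓ : ∀ t : Fin N, ∀ j ∈ T t,
      (1 + ε) ^ (q t - 1) * δ < ℓ j ∧ ℓ j ≤ (1 + ε) ^ (q t) * δ)
    (xhat y Y : J → ℝ)
    (hxhat : ∀ j, xhat j = 0 ∨ xhat j = 1)
    (hY : ∀ j, Y j = 0 ∨ Y j = 1)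
    (khat : Fin N → ℕ)
    (hky : ∀ t, ∑ j ∈ T t, y j = (khat t : ℝ))
    (hkx : ∀ t, ∑ j ∈ T t, xhat j = (khat t : ℝ))
    (hdeg : ∀ t, (⌊∑ j ∈ T t, y j⌋ : ℝ) ≤ ∑ j ∈ T t, Y j) :
    (1 / (1 + ε)) * (∑ t : Fin N, ∑ j ∈ T t, ℓ j * xhat j)
        ≤ ∑ t : Fin N, ∑ j ∈ T t, ℓ j * Y j ∧
    (1 - ε) * (∑ t : Fin N, ∑ j ∈ T t, ℓ j * xhat j)
        ≤ (1 / (1 + ε)) * (∑ t : Fin N, ∑ j ∈ T t, ℓ j * xhat j) := by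
  have hxhat_nonneg j : 0 ≤ xhat j := by rcases hxhat j with h | h <;> simp [h]
  have hY_nonneg j : 0 ≤ Y j := by rcases hY j with h | h <;> simp [h]
  have hband t : ∀ j ∈ T t,
      ℓ j ∈ Set.Icc ((1 + ε) ^ (q t - 1) * δ) ((1 + ε) * ((1 + ε) ^ (q t - 1) * δ)) := by
    intro j hj
    rw [← mul_assoc, ← pow_succ', Nat.sub_add_cancel (hq t)]
    exact ⟨(hℓ t j hj).1.le, (hℓ t j hj).2⟩
  have hcount t : ∑ j ∈ T t, xhat j ≤ ∑ j ∈ T t, Y j := by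
    simpa [hky t, hkx t] using hdeg t
  have htype t : ∑ j ∈ T t, ℓ j * xhat j ≤ (1 + ε) * ∑ j ∈ T t, ℓ j * Y j :=
    sum_mul_le_mul_sum_mul_of_mem_Icc (by positivity) (by positivity) (hband t)
      (fun j _ => hxhat_nonneg j) (fun j _ => hY_nonneg j) (hcount t)
  have hxsum_nonneg : 0 ≤ ∑ t : Fin N, ∑ j ∈ T t, ℓ j * xhat j :=
    sum_nonneg fun t _ => sum_nonneg fun j hj =>
      mul_nonneg ((hband t j hj).1.trans' (by positivity)) (hxhat_nonneg j)
  constructor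
  · rw [one_div_mul_eq_div, div_le_iff₀' (by positivity), mul_sum]
    exact sum_le_sum fun t _ => htype t
  · exact mul_le_mul_of_nonneg_right (one_sub_le_one_div_one_add (by linarith)) hxsum_nonneg

/-- Jobs are classified into types `T₁,…,T_N` by geometric load segments
`((1+ε)^{qₜ−1}δ, (1+ε)^{qₜ}δ]`; the fractional solution `y` matches the integral per-type
counts `k̂ₜ` of the 0/1 solution `x̂`, and the rounded 0/1 variables `Y` preserve the
per-type degrees up to rounding down.  Then
`∑ₜ ∑_{j∈Tₜ} ℓⱼ Yⱼ ≥ (1/(1+ε))·∑ₜ ∑_{j∈Tₜ} ℓⱼ x̂ⱼ ≥ (1−ε)·∑ₜ ∑_{j∈Tₜ} ℓⱼ x̂ⱼ`. -/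
theorem santa_claus_heavy_types_bound {J : Type*} [DecidableEq J]
    (ε δ : ℝ) (hε : 0 < ε) (hδ : 0 < δ)
    (N : ℕ) (T : Fin N → Finset J)
    (hdisj : ∀ s t : Fin N, s ≠ t → Disjoint (T s) (T t))
    (q : Fin N → ℕ) (hq : ∀ t, 1 ≤ q t)
    (ℓ : J → ℝ)
    (hℓ : ∀ t : Fin N, ∀ j ∈ T t,
      (1 + ε) ^ (q t - 1) * δ < ℓ j ∧ ℓ j ≤ (1 + ε) ^ (q t) * δ)
    (xhat y Y : J → ℝ)
    (hxhat : ∀ j, xhat j = 0 ∨ xhat j = 1)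
    (hy : ∀ j, 0 ≤ y j ∧ y j ≤ 1)
    (hY : ∀ j, Y j = 0 ∨ Y j = 1)
    (khat : Fin N → ℕ)
    (hky : ∀ t, ∑ j ∈ T t, y j = (khat t : ℝ))
    (hkx : ∀ t, ∑ j ∈ T t, xhat j = (khat t : ℝ))
    (hdeg : ∀ t, (⌊∑ j ∈ T t, y j⌋ : ℝ) ≤ ∑ j ∈ T t, Y j) :
    (1 / (1 + ε)) * (∑ t : Fin N, ∑ j ∈ T t, ℓ j * xhat j)
        ≤ ∑ t : Fin N, ∑ j ∈ T t, ℓ j * Y j ∧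
    (1 - ε) * (∑ t : Fin N, ∑ j ∈ T t, ℓ j * xhat j)
        ≤ (1 / (1 + ε)) * (∑ t : Fin N, ∑ j ∈ T t, ℓ j * xhat j) :=
  santa_claus_heavy_types_bound_general ε δ hε hδ N T q hq ℓ hℓ xhat y Y hxhat hY khat hky hkx hdeg
end

section
/- With probability at least 1 − α, one has ∑_{t=1}^N ∑_{j∈Tₜ} ℓ_j Y_j ≥ (1−ε)²·max{L̂ − ε, 0}. -/
/-!
Call a type `t` heavy if its fractional load `Lₜ = ∑_{j∈Tₜ} ℓⱼ y*ⱼ` is at least `ε²/N`. The light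
types carry at most `N · ε²/N = ε²` of the load, so if every heavy type keeps a `(1 - ε)` fraction
of its load, the rounded load is at least `(1 - ε)(L̂ - ε²) ≥ (1 - ε)²(L̂ - ε)`. After rescaling the
loads by `1/δ`, (P3) bounds the failure probability of a heavy type by
`exp(-Lₜ ε²/(2δ)) ≤ exp(-ε⁴/(2δN)) ≤ α/N`, and a union bound over the at most `N` heavy types
concludes.
-/

open MeasureTheory Finset

theorem natCast_mul_div_le {a : ℝ} (ha : 0 ≤ a) (n : ℕ) : n * (a / n) ≤ a := by
  rcases eq_or_ne (n : ℝ) 0 with hn | hn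
  · simp [hn, ha]
  · rw [mul_div_cancel₀ _ hn]

section Probability

variable {Ω : Type*} [MeasurableSpace Ω] {μ : Measure Ω}

theorem one_sub_le_measureReal_of_compl_subset_biUnion [IsProbabilityMeasure μ]
    {ι : Type*} {E : Set Ω} {S : Finset ι} {B : ι → Set Ω} {α : ℝ} {n : ℕ} (hα : 0 ≤ α)
    (hS : S.card ≤ n) (hsub : Eᶜ ⊆ ⋃ i ∈ S, B i) (hB : ∀ i ∈ S, μ.real (B i) ≤ α / n) :
    1 - α ≤ μ.real E := by
  have hcover : 1 ≤ μ.real E + μ.real Eᶜ := by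
    simpa [probReal_univ] using measureReal_union_le (μ := μ) E Eᶜ
  have hcompl : μ.real Eᶜ ≤ α := calc
    μ.real Eᶜ ≤ μ.real (⋃ i ∈ S, B i) := measureReal_mono hsub (measure_ne_top _ _)
    _ ≤ ∑ i ∈ S, μ.real (B i) := measureReal_biUnion_finset_le S B
    _ ≤ ∑ _i ∈ S, α / n := sum_le_sum hB
    _ = S.card * (α / n) := by rw [sum_const, nsmul_eq_mul]
    _ ≤ n * (α / n) := by gcongr
    _ ≤ α := natCast_mul_div_le hα n
  linarith

theorem integrable_of_forall_eq_zero_or_eq_one [IsFiniteMeasure μ] {X : Ω → ℝ}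
    (hX : Measurable X) (h01 : ∀ ω, X ω = 0 ∨ X ω = 1) : Integrable X μ :=
  Integrable.of_bound hX.aestronglyMeasurable 1 <| ae_of_all μ fun ω => by
    rcases h01 ω with h | h <;> simp [h]

theorem integral_finsetSum_mul {J : Type*} {s : Finset J} {Y : J → Ω → ℝ}
    (hY : ∀ j ∈ s, Integrable (Y j) μ) (c : J → ℝ) :
    ∫ ω, ∑ j ∈ s, c j * Y j ω ∂μ = ∑ j ∈ s, c j * ∫ ω, Y j ω ∂μ := by
  rw [integral_finsetSum _ fun j hj => (hY j hj).const_mul (c j)]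
  simp only [integral_const_mul]

theorem measureReal_sum_le_one_sub_mul_le_exp {J : Type*} {s : Finset J} {Y : J → Ω → ℝ}
    {ε δ m : ℝ} {ℓ : J → ℝ} (hδ : 0 < δ) (hℓ : ∀ j ∈ s, 0 ≤ ℓ j ∧ ℓ j ≤ δ)
    (hm : m ≤ ∫ ω, ∑ j ∈ s, ℓ j * Y j ω ∂μ)
    (htail : ∀ a : J → ℝ, (∀ j ∈ s, 0 ≤ a j ∧ a j ≤ 1) →
      ∀ m : ℝ, m ≤ (∫ ω, ∑ j ∈ s, a j * Y j ω ∂μ) →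
        μ.real {ω | ∑ j ∈ s, a j * Y j ω ≤ (1 - ε) * m} ≤ Real.exp (-(m * ε ^ 2 / 2))) :
    μ.real {ω | ∑ j ∈ s, ℓ j * Y j ω ≤ (1 - ε) * m} ≤ Real.exp (-(m * ε ^ 2 / (2 * δ))) := by
  have hscale : ∀ ω, ∑ j ∈ s, ℓ j / δ * Y j ω = (∑ j ∈ s, ℓ j * Y j ω) / δ := fun ω => by
    rw [sum_div]
    exact sum_congr rfl fun j _ => div_mul_eq_mul_div _ _ _
  have hcoeff : ∀ j ∈ s, 0 ≤ ℓ j / δ ∧ ℓ j / δ ≤ 1 := fun j hj =>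
    ⟨div_nonneg (hℓ j hj).1 hδ.le, (div_le_one hδ).mpr (hℓ j hj).2⟩
  have hmean : m / δ ≤ ∫ ω, ∑ j ∈ s, ℓ j / δ * Y j ω ∂μ := by
    simp only [hscale, integral_div]
    gcongr
  have hevent : {ω | ∑ j ∈ s, ℓ j * Y j ω ≤ (1 - ε) * m} =
      {ω | ∑ j ∈ s, ℓ j / δ * Y j ω ≤ (1 - ε) * (m / δ)} := by
    ext ω
    simp only [Set.mem_ofPred_eq, hscale, ← mul_div_assoc, div_le_div_iff_of_pos_right hδ]
  rw [hevent]
  convert htail _ hcoeff _ hmean using 3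
  ring

end Probability

theorem one_sub_mul_sum_sub_le_sum_of_heavy {ι : Type*} [Fintype ι] {L X : ι → ℝ} {ε η : ℝ}
    (hε : ε ≤ 1) (hη : 0 ≤ η) (hX : ∀ i, 0 ≤ X i)
    (hheavy : ∀ i, η / Fintype.card ι ≤ L i → (1 - ε) * L i ≤ X i) :
    (1 - ε) * (∑ i, L i - η) ≤ ∑ i, X i := by
  set n : ℝ := (Fintype.card ι : ℝ)
  have hpoint : ∀ i, (1 - ε) * (L i - η / n) ≤ X i := fun i => by
    have hthr : 0 ≤ (1 - ε) * (η / n) := by positivity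
    by_cases hi : η / n ≤ L i
    · linarith [hheavy i hi]
    · nlinarith [hX i]
  have hlight : n * (η / n) ≤ η := natCast_mul_div_le hη _
  calc (1 - ε) * (∑ i, L i - η) ≤ (1 - ε) * (∑ i, L i - n * (η / n)) := by gcongr
    _ = ∑ i, (1 - ε) * (L i - η / n) := by
        rw [← mul_sum, sum_sub_distrib, sum_const, card_univ, nsmul_eq_mul]
    _ ≤ ∑ i, X i := sum_le_sum fun i _ => hpoint i

theorem one_sub_sq_mul_max_sub_le_sum_of_heavy {ι : Type*} [Fintype ι] {L X : ι → ℝ}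
    {ε Λ : ℝ} (hε0 : 0 ≤ ε) (hε1 : ε ≤ 1) (hX : ∀ i, 0 ≤ X i) (hload : ε ≤ Λ → Λ ≤ ∑ i, L i)
    (hheavy : ∀ i, ε ^ 2 / Fintype.card ι ≤ L i → (1 - ε) * L i ≤ X i) :
    (1 - ε) ^ 2 * max (Λ - ε) 0 ≤ ∑ i, X i := by
  rcases le_or_gt ε Λ with hΛ | hΛ
  · rw [max_eq_left (sub_nonneg.mpr hΛ)]
    calc (1 - ε) ^ 2 * (Λ - ε) ≤ (1 - ε) * (Λ - ε ^ 2) := by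
          nlinarith [mul_nonneg (mul_nonneg hε0 (sub_nonneg.mpr hε1)) (sub_nonneg.mpr hΛ)]
      _ ≤ (1 - ε) * (∑ i, L i - ε ^ 2) := by
          gcongr
          exact hload hΛ
      _ ≤ ∑ i, X i := one_sub_mul_sum_sub_le_sum_of_heavy hε1 (sq_nonneg ε) hX hheavy
  · rw [max_eq_right (by linarith), mul_zero]
    exact sum_nonneg fun i _ => hX i

theorem santa_claus_light_types_concentration_general {Ω : Type*} [MeasurableSpace Ω]
    (μ : Measure Ω) [IsProbabilityMeasure μ] {J : Type*}
    (ε δ α Lhat : ℝ)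
    (hε : ε ∈ Set.Ioo (0 : ℝ) 1) (hδ : 0 < δ) (hα : α ∈ Set.Ioc (0 : ℝ) 1)
    (N : ℕ) (T : Fin N → Finset J)
    (ℓ : J → ℝ) (hℓ : ∀ j, 0 ≤ ℓ j ∧ ℓ j ≤ δ)
    (ystar : J → ℝ)
    (hyload : ε ≤ Lhat → Lhat ≤ ∑ t : Fin N, ∑ j ∈ T t, ℓ j * ystar j)
    (hδsmall : Real.exp (-(ε ^ 4 / (2 * δ * N))) ≤ α / N)
    (Y : J → Ω → ℝ)
    (hYmeas : ∀ j, Measurable (Y j))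
    (hY01 : ∀ j ω, Y j ω = 0 ∨ Y j ω = 1)
    (hP1 : ∀ j, (∫ ω, Y j ω ∂μ) = ystar j)
    (hP3 : ∀ t : Fin N, ∀ a : J → ℝ, (∀ j ∈ T t, 0 ≤ a j ∧ a j ≤ 1) →
      ∀ m : ℝ, m ≤ (∫ ω, ∑ j ∈ T t, a j * Y j ω ∂μ) →
        (μ {ω | ∑ j ∈ T t, a j * Y j ω ≤ (1 - ε) * m}).toReal
          ≤ Real.exp (-(m * ε ^ 2 / 2))) :
    1 - α ≤ (μ {ω |
      (1 - ε) ^ 2 * max (Lhat - ε) 0 ≤ ∑ t : Fin N, ∑ j ∈ T t, ℓ j * Y j ω}).toReal := by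
  obtain ⟨hε0, hε1⟩ := hε
  set L : Fin N → ℝ := fun t => ∑ j ∈ T t, ℓ j * ystar j
  have hmean : ∀ t, ∫ ω, ∑ j ∈ T t, ℓ j * Y j ω ∂μ = L t := fun t => by
    simp only [integral_finsetSum_mul fun j _ =>
      integrable_of_forall_eq_zero_or_eq_one (hYmeas j) (hY01 j), hP1, L]
  set S := univ.filter fun t => ε ^ 2 / N ≤ L t
  have hbad : ∀ t ∈ S, μ.real {ω | ∑ j ∈ T t, ℓ j * Y j ω ≤ (1 - ε) * L t} ≤ α / N := by
    intro t ht
    have hheavy : ε ^ 2 / N ≤ L t := (mem_filter.mp ht).2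
    refine (measureReal_sum_le_one_sub_mul_le_exp hδ (fun j _ => hℓ j) (hmean t).ge
      (hP3 t)).trans (le_trans ?_ hδsmall)
    rw [Real.exp_le_exp, neg_le_neg_iff]
    calc ε ^ 4 / (2 * δ * N) = ε ^ 2 / N * ε ^ 2 / (2 * δ) := by ring
      _ ≤ L t * ε ^ 2 / (2 * δ) := by gcongr
  have hgood : {ω | (1 - ε) ^ 2 * max (Lhat - ε) 0 ≤ ∑ t, ∑ j ∈ T t, ℓ j * Y j ω}ᶜ ⊆
      ⋃ t ∈ S, {ω | ∑ j ∈ T t, ℓ j * Y j ω ≤ (1 - ε) * L t} := fun ω hω => by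
    by_contra hω'
    simp only [Set.mem_iUnion, Set.mem_ofPred_eq, not_exists, not_le] at hω'
    have hX : ∀ t, 0 ≤ ∑ j ∈ T t, ℓ j * Y j ω := fun t => sum_nonneg fun j _ =>
      mul_nonneg (hℓ j).1 (by rcases hY01 j ω with h | h <;> simp [h])
    exact hω <| one_sub_sq_mul_max_sub_le_sum_of_heavy hε0.le hε1.le hX hyload
      fun t ht => (hω' t (by simpa [S] using ht)).le
  exact one_sub_le_measureReal_of_compl_subset_biUnion hα.1.le
    (by simpa using card_le_univ S) hgood hbad

/-- **Claim 1 of the Santa Claus rounding analysis.**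
Jobs in the disjoint types `T₁,…,T_N` have small loads `ℓⱼ ∈ [0,δ]`, the fractional
solution `y*` has total load at least `L̂` whenever `L̂ ≥ ε`, and
`exp(−ε⁴/(2δN)) ≤ α/N`.  If the rounded 0/1 random variables `Yⱼ` satisfy the marginal
property (P1) `E[Yⱼ] = y*ⱼ` and the concentration property (P3), then with probability
at least `1 − α` one has `∑ₜ ∑_{j∈Tₜ} ℓⱼ Yⱼ ≥ (1−ε)²·max{L̂ − ε, 0}`. -/
theorem santa_claus_light_types_concentration {Ω : Type*} [MeasurableSpace Ω]
    (μ : Measure Ω) [IsProbabilityMeasure μ] {J : Type*} [DecidableEq J]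
    (ε δ α Lhat : ℝ)
    (hε : ε ∈ Set.Ioo (0 : ℝ) 1) (hδ : 0 < δ) (hα : α ∈ Set.Ioc (0 : ℝ) 1)
    (hL : 0 ≤ Lhat)
    (N : ℕ) (T : Fin N → Finset J)
    (hdisj : ∀ s t : Fin N, s ≠ t → Disjoint (T s) (T t))
    (ℓ : J → ℝ) (hℓ : ∀ j, 0 ≤ ℓ j ∧ ℓ j ≤ δ)
    (ystar : J → ℝ) (hy : ∀ j, 0 ≤ ystar j ∧ ystar j ≤ 1)
    (hyload : ε ≤ Lhat → Lhat ≤ ∑ t : Fin N, ∑ j ∈ T t, ℓ j * ystar j)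
    (hδsmall : Real.exp (-(ε ^ 4 / (2 * δ * N))) ≤ α / N)
    (Y : J → Ω → ℝ)
    (hYmeas : ∀ j, Measurable (Y j))
    (hY01 : ∀ j ω, Y j ω = 0 ∨ Y j ω = 1)
    (hP1 : ∀ j, (∫ ω, Y j ω ∂μ) = ystar j)
    (hP3 : ∀ t : Fin N, ∀ a : J → ℝ, (∀ j ∈ T t, 0 ≤ a j ∧ a j ≤ 1) →
      ∀ m : ℝ, m ≤ (∫ ω, ∑ j ∈ T t, a j * Y j ω ∂μ) →
        (μ {ω | ∑ j ∈ T t, a j * Y j ω ≤ (1 - ε) * m}).toReal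
          ≤ Real.exp (-(m * ε ^ 2 / 2))) :
    1 - α ≤ (μ {ω |
      (1 - ε) ^ 2 * max (Lhat - ε) 0 ≤ ∑ t : Fin N, ∑ j ∈ T t, ℓ j * Y j ω}).toReal :=
  santa_claus_light_types_concentration_general μ ε δ α Lhat hε hδ hα N T ℓ hℓ ystar hyload hδsmall
    Y hYmeas hY01 hP1 hP3
end

section
/- Let j₀ = β(t_min). Then R_{t_min} ≥ b_{j₀} + (1−ε)·d_{j₀} − 2ε·OPT. -/
open MeasureTheory ProbabilityTheory

/-!
Write `i = σ(t_min)` and `j = β(i)`. The guesses satisfy `g_j ≥ b_j − ε²ℰ ≥ b_j − ε·OPT`, and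
`R_{t_min} = E[max(X_i, R_{t_min+1})]` with `R_{t_min+1} ≥ g_j` gives
`R_{t_min} ≥ g_j + E[(X_i − g_j)⁺]`. In a jump bucket `i` is the only element, so the load
guarantee bounds this expectation below by `(1−ε)·d_j`; in a stable bucket `(1−ε)·d_j ≤ ε·OPT`
and the expectation is simply dropped.
-/

section MaxConst

variable {Ω : Type*} [MeasurableSpace Ω] {μ : Measure Ω} {f : Ω → ℝ}

theorem integral_max_const_eq_add_integral_max_sub_zero [IsProbabilityMeasure μ]
    (hf : Integrable f μ) (c : ℝ) :
    ∫ ω, max (f ω) c ∂μ = c + ∫ ω, max (f ω - c) 0 ∂μ := by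
  have hpos : Integrable (fun ω => max (f ω - c) 0) μ := (hf.sub (integrable_const c)).pos_part
  calc ∫ ω, max (f ω) c ∂μ = ∫ ω, (c + max (f ω - c) 0) ∂μ := by
        congr 1
        ext ω
        rw [← sub_self c, max_sub_sub_right]
        ring
    _ = c + ∫ ω, max (f ω - c) 0 ∂μ := by
        rw [integral_add (integrable_const c) hpos, integral_const, probReal_univ, one_smul]

theorem integral_max_const_mono [IsFiniteMeasure μ] (hf : Integrable f μ) {c c' : ℝ}
    (hc : c ≤ c') : ∫ ω, max (f ω) c ∂μ ≤ ∫ ω, max (f ω) c' ∂μ :=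
  integral_mono (hf.sup (integrable_const c)) (hf.sup (integrable_const c'))
    fun _ => max_le_max le_rfl hc

end MaxConst

-- Positions are 0-based: `t : Fin n` is the paper's time `t + 1`, so `R t` is the paper's `R_{t+1}`.
theorem freeOrderProphets_ahead_of_schedule_bound_general
    {Ω : Type*} [MeasurableSpace Ω] (μ : Measure Ω) [IsProbabilityMeasure μ]
    (n m : ℕ)
    (ε OPT E : ℝ) (hε : ε ∈ Set.Ioo (0 : ℝ) 1) (hOPT : 0 < OPT)
    (hE2 : E ≤ OPT)
    (X : Fin n → Ω → ℝ)
    (hint : ∀ i, Integrable (X i) μ)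
    (B : ℕ → Finset (Fin n))
    (b g d : ℕ → ℝ)
    (hg : ∀ j ∈ Finset.Icc 1 m, max 0 (b j - ε ^ 2 * E) ≤ g j ∧ g j ≤ b j)
    (hbucket : ∀ j ∈ Finset.Icc 1 m, (B j).card ≤ 1 ∨ d j ≤ ε * OPT)
    (hload : ∀ j ∈ Finset.Icc 1 m,
      (1 - ε) * d j ≤ ∑ i ∈ B j, ∫ ω, max (X i ω - g j) 0 ∂μ)
    (σ : Equiv.Perm (Fin n))
    (β : Fin n → ℕ)
    (hβ : ∀ i : Fin n, β i ∈ Finset.Icc 1 m ∧ i ∈ B (β i))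
    (R : ℕ → ℝ)
    (hR : ∀ t : Fin n, R (t : ℕ) = ∫ ω, max (X (σ t) ω) (R ((t : ℕ) + 1)) ∂μ)
    (tmin : Fin n)
    (htmin1 : g (β (σ tmin)) ≤ R ((tmin : ℕ) + 1)) :
    b (β (σ tmin)) + (1 - ε) * d (β (σ tmin)) - 2 * ε * OPT ≤ R (tmin : ℕ) := by
  set i := σ tmin
  set j := β i
  obtain ⟨hε0, hε1⟩ := hε
  obtain ⟨hj, hij⟩ := hβ i
  have hεOPT : 0 ≤ ε * OPT := by positivity
  have hεE : ε ^ 2 * E ≤ ε * OPT := by nlinarith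
  have hbg : b j - ε * OPT ≤ g j := by linarith [le_max_right 0 (b j - ε ^ 2 * E), (hg j hj).1]
  have hexcess : 0 ≤ ∫ ω, max (X i ω - g j) 0 ∂μ := integral_nonneg fun _ => le_max_right _ _
  have hgR : g j + ∫ ω, max (X i ω - g j) 0 ∂μ ≤ R tmin := by
    rw [hR tmin, ← integral_max_const_eq_add_integral_max_sub_zero (hint i)]
    exact integral_max_const_mono (hint i) htmin1
  rcases hbucket j hj with hjump | hstable
  · have hload_i := hload j hj
    rw [Finset.sum_eq_single_of_mem i hij
      fun k hk hki => absurd (Finset.card_le_one.mp hjump k hk i hij) hki] at hload_i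
    linarith
  · have hload_small : (1 - ε) * d j ≤ ε * OPT := by
      rcases le_total 0 (d j) with hd | hd <;> nlinarith
    linarith

/-- **first claim of Theorem 3 / free-order prophets analysis.**
In the bucketed free-order prophets setup (buckets `B₁,…,B_m` listed by the permutation
`σ` in reverse order, base values `b`, guesses `g`, delta-guesses `d`, suffix values
`R_t`, and `t_min` the first time we are ahead of schedule), with `j₀ = β(σ(t_min))`:
`R_{t_min} ≥ b_{j₀} + (1−ε)·d_{j₀} − 2ε·OPT`.  (Indices of positions are 0-based:
position `t : Fin n` corresponds to the paper's time `t+1`, and `R n = 0` is the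
paper's `R_{n+1}`.) -/
theorem freeOrderProphets_ahead_of_schedule_bound
    {Ω : Type*} [MeasurableSpace Ω] (μ : Measure Ω) [IsProbabilityMeasure μ]
    (n m : ℕ) (hn : 0 < n) (hm : 1 ≤ m)
    (ε OPT E : ℝ) (hε : ε ∈ Set.Ioo (0 : ℝ) 1) (hOPT : 0 < OPT)
    (hE1 : (1 - ε) * OPT ≤ E) (hE2 : E ≤ OPT)
    (X : Fin n → Ω → ℝ)
    (hmeas : ∀ i, Measurable (X i))
    (hint : ∀ i, Integrable (X i) μ)
    (hpos : ∀ i ω, 0 ≤ X i ω)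
    (hindep : iIndepFun X μ)
    (B : ℕ → Finset (Fin n))
    (hpart : ∀ i : Fin n, ∃! j, j ∈ Finset.Icc 1 m ∧ i ∈ B j)
    (hmbound : (m : ℝ) ≤ 2 / ε + 1)
    (hB1 : (B 1).Nonempty)
    (b g d : ℕ → ℝ)
    (hb1 : b 1 = 0) (hbtop : b (m + 1) = OPT)
    (hbmono : ∀ j ∈ Finset.Icc 1 m, b j ≤ b (j + 1))
    (hg : ∀ j ∈ Finset.Icc 1 m, max 0 (b j - ε ^ 2 * E) ≤ g j ∧ g j ≤ b j)
    (hd : ∀ j ∈ Finset.Icc 1 m, b (j + 1) - b j - ε ^ 2 * E ≤ d j ∧ d j ≤ b (j + 1) - b j)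
    (hbucket : ∀ j ∈ Finset.Icc 1 m, (B j).card ≤ 1 ∨ d j ≤ ε * OPT)
    (hload : ∀ j ∈ Finset.Icc 1 m,
      (1 - ε) * d j ≤ ∑ i ∈ B j, ∫ ω, max (X i ω - g j) 0 ∂μ)
    (σ : Equiv.Perm (Fin n))
    (β : Fin n → ℕ)
    (hβ : ∀ i : Fin n, β i ∈ Finset.Icc 1 m ∧ i ∈ B (β i))
    (horder : ∀ s t : Fin n, s ≤ t → β (σ t) ≤ β (σ s))
    (R : ℕ → ℝ)
    (hRn : R n = 0)
    (hR : ∀ t : Fin n, R (t : ℕ) = ∫ ω, max (X (σ t) ω) (R ((t : ℕ) + 1)) ∂μ)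
    (tmin : Fin n)
    (htmin1 : g (β (σ tmin)) ≤ R ((tmin : ℕ) + 1))
    (htmin2 : ∀ s : Fin n, s < tmin → R ((s : ℕ) + 1) < g (β (σ s))) :
    b (β (σ tmin)) + (1 - ε) * d (β (σ tmin)) - 2 * ε * OPT ≤ R (tmin : ℕ) :=
  freeOrderProphets_ahead_of_schedule_bound_general μ n m ε OPT E hε hOPT hE2 X hint B b g d hg
    hbucket hload σ β hβ R hR tmin htmin1
end

section
/- Let j₀ = β(t_min). Then ∑_{t < t_min} (R_t − R_{t+1}) ≥ (1−ε)·∑_{j=j₀+1}^{m} (b_{j+1} − b_j) − 3ε·OPT. -/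
/-!
Before `t_min` the continuation value `R_{t+1}` lies below the threshold `g` of the current
bucket, so each step gains `R_t − R_{t+1} = E[(X − R_{t+1})⁺] ≥ E[(X − g)⁺]`. Every bucket above
`j₀` is scanned before `t_min`, so these gains add up to at least the buckets' loads
`(1−ε)·∑ d_j`; replacing `d_j` by `b_{j+1} − b_j` loses `ε²·E` per bucket, at most
`m·ε²·OPT ≤ 3ε·OPT` in total.
-/

open MeasureTheory ProbabilityTheory Finset

section PositivePartIntegrals

variable {Ω : Type*} [MeasurableSpace Ω] {μ : Measure Ω} {X : Ω → ℝ}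

theorem MeasureTheory.Integrable.max_sub_const_zero [IsFiniteMeasure μ] (hX : Integrable X μ)
    (c : ℝ) :
    Integrable (fun ω => max (X ω - c) 0) μ := by
  simpa [Pi.sup_def] using (hX.sub (integrable_const c)).sup (integrable_const (0 : ℝ))

theorem integral_max_const_sub_const [IsProbabilityMeasure μ] (hX : Integrable X μ) (c : ℝ) :
    ∫ ω, max (X ω) c ∂μ - c = ∫ ω, max (X ω - c) 0 ∂μ := by
  have hsplit : ∀ ω, max (X ω) c = max (X ω - c) 0 + c := fun ω => by
    rw [← max_add_add_right, sub_add_cancel, zero_add]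
  simp_rw [hsplit]
  rw [integral_add (hX.max_sub_const_zero c) (integrable_const c)]
  simp

theorem antitone_integral_max_sub_zero [IsFiniteMeasure μ] (hX : Integrable X μ) :
    Antitone fun c => ∫ ω, max (X ω - c) 0 ∂μ := fun _ _ hc =>
  integral_mono (hX.max_sub_const_zero _) (hX.max_sub_const_zero _) fun ω =>
    max_le_max (by linarith) le_rfl

end PositivePartIntegrals

theorem sum_filter_lt_le_sum_Iio {ι α M : Type*} [Fintype ι] [LinearOrder ι]
    [LocallyFiniteOrderBot ι] [LinearOrder α] [AddCommMonoid M] [PartialOrder M]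
    [IsOrderedAddMonoid M] (σ : Equiv.Perm ι) {β : ι → α} (hβ : Antitone (β ∘ σ))
    {f : ι → M} (hf : ∀ i, 0 ≤ f i) (t₀ : ι) :
    ∑ i with β (σ t₀) < β i, f i ≤ ∑ t ∈ Iio t₀, f (σ t) := by
  calc ∑ i with β (σ t₀) < β i, f i = ∑ t with β (σ t₀) < β (σ t), f (σ t) :=
        (sum_equiv σ (by simp) (by simp)).symm
    _ ≤ ∑ t ∈ Iio t₀, f (σ t) := by
        refine sum_le_sum_of_subset_of_nonneg (fun t ht => ?_) fun _ _ _ => hf _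
        rw [mem_filter] at ht
        exact mem_Iio.2 (lt_of_not_ge fun h => (hβ h).not_gt ht.2)

section Buckets

variable {ι : Type*} [Fintype ι] {s : Finset ℕ} {B : ℕ → Finset ι} {β : ι → ℕ}

theorem bucket_eq_filter (hpart : ∀ i, ∃! j, j ∈ s ∧ i ∈ B j) (hβ : ∀ i, β i ∈ s ∧ i ∈ B (β i))
    {j : ℕ} (hj : j ∈ s) : B j = ({i | β i = j} : Finset ι) := by
  ext i
  rw [mem_filter, and_iff_right (mem_univ i)]
  refine ⟨fun hi => (hpart i).unique (hβ i) ⟨hj, hi⟩, ?_⟩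
  rintro rfl
  exact (hβ i).2

theorem sum_sum_bucket_eq_sum_filter {M : Type*} [AddCommMonoid M]
    (hpart : ∀ i, ∃! j, j ∈ s ∧ i ∈ B j) (hβ : ∀ i, β i ∈ s ∧ i ∈ B (β i))
    {t : Finset ℕ} (hts : t ⊆ s) (f : ι → M) :
    ∑ j ∈ t, ∑ i ∈ B j, f i = ∑ i with β i ∈ t, f i := by
  rw [← sum_fiberwise_of_maps_to (g := β) (t := t) (fun i hi => (mem_filter.1 hi).2)]
  refine sum_congr rfl fun j hj => ?_
  rw [bucket_eq_filter hpart hβ (hts hj), filter_filter]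
  exact congrArg (∑ i ∈ ·, f i) (filter_congr fun i _ => ⟨fun h => ⟨h ▸ hj, h⟩, And.right⟩)

end Buckets

theorem one_sub_mul_sum_sub_le_sum_of_rounding {ε OPT E : ℝ} {m : ℕ} (hε : ε ∈ Set.Ioo (0 : ℝ) 1)
    (hOPT : 0 ≤ OPT) (hE : E ≤ OPT) (hm : (m : ℝ) ≤ 2 / ε + 1) {J : Finset ℕ} (hJ : #J ≤ m)
    {Δ d : ℕ → ℝ} (hd : ∀ j ∈ J, Δ j - ε ^ 2 * E ≤ d j) :
    (1 - ε) * ∑ j ∈ J, Δ j - 3 * ε * OPT ≤ ∑ j ∈ J, (1 - ε) * d j := by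
  obtain ⟨hε0, hε1⟩ := hε
  have hmε : m * ε ≤ 2 + ε := by
    have := mul_le_mul_of_nonneg_right hm hε0.le
    rwa [add_mul, div_mul_cancel₀ _ hε0.ne', one_mul] at this
  have hslack : (1 - ε) * (ε ^ 2 * E) ≤ ε ^ 2 * OPT := by
    have : (1 - ε) * E ≤ OPT := by rcases le_total 0 E with hE0 | hE0 <;> nlinarith
    nlinarith [mul_le_mul_of_nonneg_left this (sq_nonneg ε)]
  have hloss : (#J : ℝ) * ((1 - ε) * (ε ^ 2 * E)) ≤ 3 * ε * OPT :=
    calc (#J : ℝ) * ((1 - ε) * (ε ^ 2 * E)) ≤ #J * (ε ^ 2 * OPT) :=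
          mul_le_mul_of_nonneg_left hslack (Nat.cast_nonneg _)
      _ ≤ m * (ε ^ 2 * OPT) :=
          mul_le_mul_of_nonneg_right (by exact_mod_cast hJ) (mul_nonneg (sq_nonneg ε) hOPT)
      _ = (m * ε) * (ε * OPT) := by ring
      _ ≤ 3 * (ε * OPT) := by gcongr; linarith
      _ = 3 * ε * OPT := by ring
  calc (1 - ε) * ∑ j ∈ J, Δ j - 3 * ε * OPT
      ≤ ∑ j ∈ J, (1 - ε) * Δ j - #J * ((1 - ε) * (ε ^ 2 * E)) := by
        rw [mul_sum]; linarith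
    _ = ∑ j ∈ J, (1 - ε) * (Δ j - ε ^ 2 * E) := by
        simp only [mul_sub, sum_sub_distrib, sum_const, nsmul_eq_mul]
    _ ≤ ∑ j ∈ J, (1 - ε) * d j :=
        sum_le_sum fun j hj => mul_le_mul_of_nonneg_left (hd j hj) (by linarith)

/-- Positions are 0-based: position `t : Fin n` is the paper's time `t + 1`. -/
theorem freeOrderProphets_behind_schedule_gain_bound_general
    {Ω : Type*} [MeasurableSpace Ω] (μ : Measure Ω) [IsProbabilityMeasure μ]
    (n m : ℕ)
    (ε OPT E : ℝ) (hε : ε ∈ Set.Ioo (0 : ℝ) 1) (hOPT : 0 < OPT)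
    (hE2 : E ≤ OPT)
    (X : Fin n → Ω → ℝ)
    (hint : ∀ i, Integrable (X i) μ)
    (B : ℕ → Finset (Fin n))
    (hpart : ∀ i : Fin n, ∃! j, j ∈ Finset.Icc 1 m ∧ i ∈ B j)
    (hmbound : (m : ℝ) ≤ 2 / ε + 1)
    (b g d : ℕ → ℝ)
    (hd : ∀ j ∈ Finset.Icc 1 m, b (j + 1) - b j - ε ^ 2 * E ≤ d j ∧ d j ≤ b (j + 1) - b j)
    (hload : ∀ j ∈ Finset.Icc 1 m,
      (1 - ε) * d j ≤ ∑ i ∈ B j, ∫ ω, max (X i ω - g j) 0 ∂μ)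
    (σ : Equiv.Perm (Fin n))
    (β : Fin n → ℕ)
    (hβ : ∀ i : Fin n, β i ∈ Finset.Icc 1 m ∧ i ∈ B (β i))
    (horder : ∀ s t : Fin n, s ≤ t → β (σ t) ≤ β (σ s))
    (R : ℕ → ℝ)
    (hR : ∀ t : Fin n, R (t : ℕ) = ∫ ω, max (X (σ t) ω) (R ((t : ℕ) + 1)) ∂μ)
    (tmin : Fin n)
    (htmin2 : ∀ s : Fin n, s < tmin → R ((s : ℕ) + 1) < g (β (σ s))) :
    (1 - ε) * (∑ j ∈ Finset.Icc (β (σ tmin) + 1) m, (b (j + 1) - b j)) - 3 * ε * OPT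
      ≤ ∑ t ∈ Finset.range (tmin : ℕ), (R t - R (t + 1)) := by
  set j₀ := β (σ tmin)
  set gain : Fin n → ℝ := fun i => ∫ ω, max (X i ω - g (β i)) 0 ∂μ
  have hhigh : Icc (j₀ + 1) m ⊆ Icc 1 m := Icc_subset_Icc_left (Nat.le_add_left 1 j₀)
  have hgain_load : ∀ j ∈ Icc (j₀ + 1) m, (1 - ε) * d j ≤ ∑ i ∈ B j, gain i := fun j hj =>
    (hload j (hhigh hj)).trans_eq <| sum_congr rfl fun i hi => by
      show _ = ∫ ω, max (X i ω - g (β i)) 0 ∂μ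
      rw [(hpart i).unique (hβ i) ⟨hhigh hj, hi⟩]
  have hgain_behind : ∀ t < tmin, gain (σ t) ≤ R t - R (t + 1) := fun t ht => by
    rw [hR t, integral_max_const_sub_const (hint _)]
    exact antitone_integral_max_sub_zero (hint _) (htmin2 t ht).le
  calc (1 - ε) * ∑ j ∈ Icc (j₀ + 1) m, (b (j + 1) - b j) - 3 * ε * OPT
      ≤ ∑ j ∈ Icc (j₀ + 1) m, (1 - ε) * d j :=
        one_sub_mul_sum_sub_le_sum_of_rounding hε hOPT.le hE2 hmbound (by simp)
          fun j hj => (hd j (hhigh hj)).1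
    _ ≤ ∑ j ∈ Icc (j₀ + 1) m, ∑ i ∈ B j, gain i := sum_le_sum hgain_load
    _ = ∑ i with β i ∈ Icc (j₀ + 1) m, gain i := sum_sum_bucket_eq_sum_filter hpart hβ hhigh gain
    _ ≤ ∑ i with j₀ < β i, gain i :=
        sum_le_sum_of_subset_of_nonneg
          (monotone_filter_right _ fun i _ hi => Nat.lt_of_succ_le (mem_Icc.1 hi).1)
          fun i _ _ => integral_nonneg fun ω => le_max_right _ _
    _ ≤ ∑ t ∈ Iio tmin, gain (σ t) :=
        sum_filter_lt_le_sum_Iio σ horder (fun i => integral_nonneg fun ω => le_max_right _ _) tmin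
    _ ≤ ∑ t ∈ Iio tmin, (R t - R (t + 1)) := sum_le_sum fun t ht => hgain_behind t (mem_Iio.1 ht)
    _ = ∑ t ∈ range tmin, (R t - R (t + 1)) := by
        rw [← Nat.Iio_eq_range, ← Fin.map_valEmbedding_Iio, sum_map]
        rfl

/-- **second claim of Theorem 3 / free-order prophets analysis.**
In the bucketed free-order prophets setup, with `j₀ = β(σ(t_min))`:
`∑_{t < t_min} (R_t − R_{t+1}) ≥ (1−ε)·∑_{j=j₀+1}^{m} (b_{j+1} − b_j) − 3ε·OPT`.
(Positions are 0-based: position `t : Fin n` corresponds to the paper's time `t+1`,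
and `R n = 0` is the paper's `R_{n+1}`.) -/
theorem freeOrderProphets_behind_schedule_gain_bound
    {Ω : Type*} [MeasurableSpace Ω] (μ : Measure Ω) [IsProbabilityMeasure μ]
    (n m : ℕ) (hn : 0 < n) (hm : 1 ≤ m)
    (ε OPT E : ℝ) (hε : ε ∈ Set.Ioo (0 : ℝ) 1) (hOPT : 0 < OPT)
    (hE1 : (1 - ε) * OPT ≤ E) (hE2 : E ≤ OPT)
    (X : Fin n → Ω → ℝ)
    (hmeas : ∀ i, Measurable (X i))
    (hint : ∀ i, Integrable (X i) μ)
    (hpos : ∀ i ω, 0 ≤ X i ω)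
    (hindep : iIndepFun X μ)
    (B : ℕ → Finset (Fin n))
    (hpart : ∀ i : Fin n, ∃! j, j ∈ Finset.Icc 1 m ∧ i ∈ B j)
    (hmbound : (m : ℝ) ≤ 2 / ε + 1)
    (hB1 : (B 1).Nonempty)
    (b g d : ℕ → ℝ)
    (hb1 : b 1 = 0) (hbtop : b (m + 1) = OPT)
    (hbmono : ∀ j ∈ Finset.Icc 1 m, b j ≤ b (j + 1))
    (hg : ∀ j ∈ Finset.Icc 1 m, max 0 (b j - ε ^ 2 * E) ≤ g j ∧ g j ≤ b j)
    (hd : ∀ j ∈ Finset.Icc 1 m, b (j + 1) - b j - ε ^ 2 * E ≤ d j ∧ d j ≤ b (j + 1) - b j)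
    (hbucket : ∀ j ∈ Finset.Icc 1 m, (B j).card ≤ 1 ∨ d j ≤ ε * OPT)
    (hload : ∀ j ∈ Finset.Icc 1 m,
      (1 - ε) * d j ≤ ∑ i ∈ B j, ∫ ω, max (X i ω - g j) 0 ∂μ)
    (σ : Equiv.Perm (Fin n))
    (β : Fin n → ℕ)
    (hβ : ∀ i : Fin n, β i ∈ Finset.Icc 1 m ∧ i ∈ B (β i))
    (horder : ∀ s t : Fin n, s ≤ t → β (σ t) ≤ β (σ s))
    (R : ℕ → ℝ)
    (hRn : R n = 0)
    (hR : ∀ t : Fin n, R (t : ℕ) = ∫ ω, max (X (σ t) ω) (R ((t : ℕ) + 1)) ∂μ)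
    (tmin : Fin n)
    (htmin1 : g (β (σ tmin)) ≤ R ((tmin : ℕ) + 1))
    (htmin2 : ∀ s : Fin n, s < tmin → R ((s : ℕ) + 1) < g (β (σ s))) :
    (1 - ε) * (∑ j ∈ Finset.Icc (β (σ tmin) + 1) m, (b (j + 1) - b j)) - 3 * ε * OPT
      ≤ ∑ t ∈ Finset.range (tmin : ℕ), (R t - R (t + 1)) :=
  freeOrderProphets_behind_schedule_gain_bound_general μ n m ε OPT E hε hOPT hE2 X hint B hpart
    hmbound b g d hd hload σ β hβ horder R hR tmin htmin2
end

section
/- R₁ ≥ (1 − 7ε)·OPT; that is, the optimal-stopping value of the permutation σ produced from the bucket assignment is at least (1−7ε) times OPT. -/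
/-!
Write `r` for the value of a suffix of `σ` and put one more item `X` with threshold `c` in front
of it. Pointwise `max X r ≥ (X - c)⁺ + min c r`, so the new value is at least
`E[(X - c)⁺] + min c r`. Chaining this over the items of a bucket `j` with threshold `g_j`
shows that putting the bucket in front raises the value to at least
`min g_j (r + ∑ E[(X_i - g_j)⁺])`, and even to `∑ E[(X_i - g_j)⁺] + min g_j r` if the bucket has
at most one item. Since `g_j ≈ b_j` and the load guarantee makes the sum
`≈ (1 - ε)(b_{j+1} - b_j)`, induction over the buckets gives
`r_j ≥ (1 - ε) b_{j+1} - ε·OPT - (j + 1) ε²ℰ` for the value `r_j` of buckets `1, …, j`.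
The term `ε·OPT` does not accumulate: it is paid only when a stable bucket falls back on its
threshold, and then the bound restarts from `g_j ≥ b_j - ε²ℰ`. With `m ≤ 2/ε + 1` the total
error is at most `ε·OPT + 4ε·OPT`.
-/

open MeasureTheory ProbabilityTheory Finset

def finIco (n t u : ℕ) : Finset (Fin n) := {s | t ≤ (s : ℕ) ∧ (s : ℕ) < u}

@[simp]
lemma mem_finIco {n t u : ℕ} {s : Fin n} : s ∈ finIco n t u ↔ t ≤ (s : ℕ) ∧ (s : ℕ) < u := by
  simp [finIco]

lemma finIco_self (n t : ℕ) : finIco n t t = ∅ := by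
  ext s; simp only [mem_finIco, notMem_empty, iff_false]; omega

lemma finIco_succ_right {n t u : ℕ} (htu : t ≤ u) (hu : u < n) :
    finIco n t (u + 1) = insert ⟨u, hu⟩ (finIco n t u) := by
  ext s; simp only [mem_finIco, mem_insert, Fin.ext_iff]; omega

lemma card_finIco {n t u : ℕ} (hu : u ≤ n) : #(finIco n t u) = u - t := by
  rw [← card_map Fin.valEmbedding, ← Nat.card_Ico]
  congr 1
  ext x
  simp only [mem_map, mem_finIco, Fin.valEmbedding_apply, mem_Ico]
  exact ⟨by rintro ⟨s, hs, rfl⟩; exact hs, fun hx => ⟨⟨x, by omega⟩, hx, rfl⟩⟩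

lemma max_sub_zero_add_min_le_max (x c r : ℝ) : max (x - c) 0 + min c r ≤ max x r := by
  rcases le_total x c with h | h
  · rw [max_eq_right (by linarith)]
    linarith [min_le_right c r, le_max_right x r]
  · rw [max_eq_left (by linarith)]
    linarith [min_le_left c r, le_max_left x r]

lemma min_add_le_min_add_of_add_min_le {c x y e S : ℝ} (he : 0 ≤ e) (hS : 0 ≤ S)
    (hxy : e + min c x ≤ y) :
    min c (x + (e + S)) ≤ min c (y + S) := by
  rcases le_total x c with h | h
  · rw [min_eq_right h] at hxy
    exact min_le_min_left c (by linarith)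
  · rw [min_eq_left h] at hxy
    exact le_min (min_le_left _ _) ((min_le_left _ _).trans (by linarith))

section OptimalStopping

variable {Ω : Type*} [MeasurableSpace Ω] {μ : Measure Ω} [IsProbabilityMeasure μ] {n : ℕ}
  {Y : Fin n → Ω → ℝ} {R : ℕ → ℝ}

lemma integral_excess_add_min_le {Z : Ω → ℝ} (hZ : Integrable Z μ) (c r : ℝ) :
    ∫ ω, max (Z ω - c) 0 ∂μ + min c r ≤ ∫ ω, max (Z ω) r ∂μ := by
  have hexcess : Integrable (fun ω => max (Z ω - c) 0) μ :=
    (hZ.sub (integrable_const c)).sup (integrable_const 0)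
  calc ∫ ω, max (Z ω - c) 0 ∂μ + min c r = ∫ ω, (max (Z ω - c) 0 + min c r) ∂μ := by
        rw [integral_add hexcess (integrable_const _), integral_const, probReal_univ, one_smul]
    _ ≤ ∫ ω, max (Z ω) r ∂μ :=
        integral_mono (hexcess.add (integrable_const _)) (hZ.sup (integrable_const r))
          fun ω => max_sub_zero_add_min_le_max (Z ω) c r

lemma excess_add_min_le_value (hY : ∀ t, Integrable (Y t) μ)
    (hR : ∀ t : Fin n, R t = ∫ ω, max (Y t ω) (R (t + 1)) ∂μ) (c : ℝ) (t : Fin n) :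
    ∫ ω, max (Y t ω - c) 0 ∂μ + min c (R (t + 1)) ≤ R t :=
  hR t ▸ integral_excess_add_min_le (hY t) c _

lemma min_add_sum_excess_le_value (hY : ∀ t, Integrable (Y t) μ)
    (hR : ∀ t : Fin n, R t = ∫ ω, max (Y t ω) (R (t + 1)) ∂μ) (c : ℝ) {t u : ℕ} (htu : t ≤ u)
    (hu : u ≤ n) :
    min c (R u + ∑ s ∈ finIco n t u, ∫ ω, max (Y s ω - c) 0 ∂μ) ≤ R t := by
  induction u, htu using Nat.le_induction with
  | base => simp [finIco_self]
  | succ u htu ih =>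
    rw [finIco_succ_right htu hu, sum_insert (by simp)]
    exact (min_add_le_min_add_of_add_min_le (integral_nonneg fun ω => le_max_right _ _)
      (sum_nonneg fun s _ => integral_nonneg fun ω => le_max_right _ _)
      (excess_add_min_le_value hY hR c ⟨u, hu⟩)).trans (ih (by omega))

lemma sum_excess_add_min_le_value (hY : ∀ t, Integrable (Y t) μ)
    (hR : ∀ t : Fin n, R t = ∫ ω, max (Y t ω) (R (t + 1)) ∂μ) (c : ℝ) {t u : ℕ} (htu : t ≤ u)
    (hut : u ≤ t + 1) (hu : u ≤ n) :
    ∑ s ∈ finIco n t u, ∫ ω, max (Y s ω - c) 0 ∂μ + min c (R u) ≤ R t := by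
  obtain rfl | rfl : u = t ∨ u = t + 1 := by omega
  · simp [finIco_self]
  · rw [finIco_succ_right le_rfl (by omega), finIco_self, insert_empty, sum_singleton]
    exact excess_add_min_le_value hY hR c ⟨t, by omega⟩

end OptimalStopping

section Buckets

variable {n : ℕ} (σ : Equiv.Perm (Fin n)) (β : Fin n → ℕ)

/-- Buckets `≤ j` occupy the positions `tailStart σ β j, …, n - 1` of `σ`. -/
def tailStart (j : ℕ) : ℕ := #{s : Fin n | j < β (σ s)}

variable {σ β}

lemma lt_tailStart_iff (horder : Antitone (β ∘ σ)) (j : ℕ) (s : Fin n) :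
    (s : ℕ) < tailStart σ β j ↔ j < β (σ s) :=
  Fin.lt_card_filter_univ_iff_apply_of_imp _ fun _ _ hki h => h.trans_le (horder hki)

lemma tailStart_le (j : ℕ) : tailStart σ β j ≤ n :=
  (card_filter_le _ _).trans (card_fin n).le

lemma tailStart_succ_le (j : ℕ) : tailStart σ β (j + 1) ≤ tailStart σ β j :=
  card_le_card fun s => by simp only [mem_filter, mem_univ, true_and]; omega

lemma tailStart_zero (hβ : ∀ i, 1 ≤ β i) : tailStart σ β 0 = n := by
  rw [tailStart, filter_true_of_mem fun s _ => show 0 < β (σ s) from hβ (σ s), card_fin]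

lemma tailStart_eq_zero {m : ℕ} (hβ : ∀ i, β i ≤ m) : tailStart σ β m = 0 := by
  rw [tailStart, card_eq_zero, filter_eq_empty_iff]
  exact fun s _ => not_lt.mpr (hβ (σ s))

variable {m : ℕ} {B : ℕ → Finset (Fin n)}

lemma mem_finIco_tailStart_iff (hpart : ∀ i : Fin n, ∃! j, j ∈ Icc 1 m ∧ i ∈ B j)
    (hβ : ∀ i : Fin n, β i ∈ Icc 1 m ∧ i ∈ B (β i)) (horder : Antitone (β ∘ σ)) {j : ℕ}
    (hj : j + 1 ≤ m) (s : Fin n) :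
    s ∈ finIco n (tailStart σ β (j + 1)) (tailStart σ β j) ↔ σ s ∈ B (j + 1) := by
  have hbucket : β (σ s) = j + 1 ↔ σ s ∈ B (j + 1) := by
    refine ⟨fun h => h ▸ (hβ (σ s)).2, fun h => ?_⟩
    obtain ⟨_, _, huniq⟩ := hpart (σ s)
    rw [huniq _ (hβ (σ s)), huniq (j + 1) ⟨mem_Icc.mpr ⟨by omega, hj⟩, h⟩]
  rw [mem_finIco, ← hbucket, not_lt.symm.trans (lt_tailStart_iff horder _ s).not,
    lt_tailStart_iff horder]
  omega

end Buckets

section BucketArithmetic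

variable {ε δ η b b' g d S r r' C : ℝ}

lemma bucket_bound_of_load (hε0 : 0 ≤ ε) (hε1 : ε ≤ 1) (hδ : 0 ≤ δ) (hd : b' - b - δ ≤ d)
    (hS : (1 - ε) * d ≤ S) (hr : (1 - ε) * b - C ≤ r) :
    (1 - ε) * b' - (C + δ) ≤ r + S := by
  nlinarith [mul_le_mul_of_nonneg_left hd (sub_nonneg.mpr hε1)]

lemma bucket_bound_of_jump (hε0 : 0 ≤ ε) (hε1 : ε ≤ 1) (hδ : 0 ≤ δ) (hb : 0 ≤ b)
    (hg : b - δ ≤ g) (hd : b' - b - δ ≤ d) (hS : (1 - ε) * d ≤ S) (hr : (1 - ε) * b - C ≤ r)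
    (hC : δ ≤ C) (hr' : S + min g r ≤ r') :
    (1 - ε) * b' - (C + δ) ≤ r' := by
  rw [← min_add_add_left] at hr'
  refine (le_min ?_ ?_).trans hr'
  · nlinarith [mul_le_mul_of_nonneg_left hd (sub_nonneg.mpr hε1)]
  · linarith [bucket_bound_of_load hε0 hε1 hδ hd hS hr]

lemma bucket_bound_of_stable (hε0 : 0 ≤ ε) (hε1 : ε ≤ 1) (hδ : 0 ≤ δ) (hb' : 0 ≤ b')
    (hg : b - δ ≤ g) (hd : b' - b - δ ≤ d) (hdη : d ≤ η) (hS : (1 - ε) * d ≤ S)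
    (hr : (1 - ε) * b - C ≤ r) (hC : η + δ ≤ C) (hr' : min g (r + S) ≤ r') :
    (1 - ε) * b' - (C + δ) ≤ r' := by
  refine (le_min ?_ (bucket_bound_of_load hε0 hε1 hδ hd hS hr)).trans hr'
  nlinarith

end BucketArithmetic

lemma nonneg_of_eq_zero_of_le_succ {b : ℕ → ℝ} {m : ℕ} (hb1 : b 1 = 0)
    (hbmono : ∀ j ∈ Icc 1 m, b j ≤ b (j + 1)) {j : ℕ} (hj : j ≤ m) : 0 ≤ b (j + 1) := by
  induction j with
  | zero => exact hb1.ge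
  | succ j ih => exact (ih (by omega)).trans (hbmono (j + 1) (mem_Icc.mpr ⟨by omega, hj⟩))

section Invariant

variable {Ω : Type*} [MeasurableSpace Ω] {μ : Measure Ω} [IsProbabilityMeasure μ] {n m : ℕ}
  {X : Fin n → Ω → ℝ} {B : ℕ → Finset (Fin n)} {β : Fin n → ℕ} {σ : Equiv.Perm (Fin n)}
  {R : ℕ → ℝ} {ε δ η : ℝ} {b g d : ℕ → ℝ}

theorem le_value_tailStart (hint : ∀ i, Integrable (X i) μ)
    (hpart : ∀ i : Fin n, ∃! j, j ∈ Icc 1 m ∧ i ∈ B j)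
    (hβ : ∀ i : Fin n, β i ∈ Icc 1 m ∧ i ∈ B (β i)) (horder : Antitone (β ∘ σ))
    (hRn : R n = 0) (hR : ∀ t : Fin n, R t = ∫ ω, max (X (σ t) ω) (R (t + 1)) ∂μ)
    (hε0 : 0 ≤ ε) (hε1 : ε ≤ 1) (hδ : 0 ≤ δ) (hη : 0 ≤ η)
    (hb1 : b 1 = 0) (hbmono : ∀ j ∈ Icc 1 m, b j ≤ b (j + 1))
    (hg : ∀ j ∈ Icc 1 m, b j - δ ≤ g j) (hd : ∀ j ∈ Icc 1 m, b (j + 1) - b j - δ ≤ d j)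
    (hbucket : ∀ j ∈ Icc 1 m, #(B j) ≤ 1 ∨ d j ≤ η)
    (hload : ∀ j ∈ Icc 1 m, (1 - ε) * d j ≤ ∑ i ∈ B j, ∫ ω, max (X i ω - g j) 0 ∂μ)
    {j : ℕ} (hj : j ≤ m) :
    (1 - ε) * b (j + 1) - (η + (j + 1) * δ) ≤ R (tailStart σ β j) := by
  induction j with
  | zero =>
    rw [tailStart_zero fun i => (mem_Icc.mp (hβ i).1).1, hRn, hb1]
    push_cast
    linarith
  | succ j ih =>
    have hjm : j + 1 ∈ Icc 1 m := mem_Icc.mpr ⟨by omega, hj⟩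
    have hY : ∀ s, Integrable (X (σ s)) μ := fun s => hint _
    have hmem := mem_finIco_tailStart_iff hpart hβ horder hj
    have hS : (1 - ε) * d (j + 1) ≤ ∑ s ∈ finIco n (tailStart σ β (j + 1)) (tailStart σ β j),
        ∫ ω, max (X (σ s) ω - g (j + 1)) 0 ∂μ :=
      (hload _ hjm).trans_eq (sum_equiv σ hmem fun _ _ => rfl).symm
    have hC : η + (j + 1) * δ + δ = η + ((j + 1 : ℕ) + 1) * δ := by push_cast; ring
    rw [← hC]
    rcases hbucket _ hjm with hjump | hstable
    · have hut : tailStart σ β j ≤ tailStart σ β (j + 1) + 1 := by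
        have hcard := card_equiv σ hmem
        rw [card_finIco (tailStart_le j)] at hcard
        omega
      exact bucket_bound_of_jump hε0 hε1 hδ (nonneg_of_eq_zero_of_le_succ hb1 hbmono (by omega))
        (hg _ hjm) (hd _ hjm) hS (ih (by omega)) (by nlinarith)
        (sum_excess_add_min_le_value hY hR _ (tailStart_succ_le j) hut (tailStart_le j))
    · exact bucket_bound_of_stable hε0 hε1 hδ (nonneg_of_eq_zero_of_le_succ hb1 hbmono hj)
        (hg _ hjm) (hd _ hjm) hstable hS (ih (by omega)) (by nlinarith)
        (min_add_sum_excess_le_value hY hR _ (tailStart_succ_le j) (tailStart_le j))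

end Invariant

-- Positions are 0-based: `R 0` is the paper's `R₁` and `R n` its `R_{n+1}`.
theorem freeOrderProphets_value_guarantee_general
    {Ω : Type*} [MeasurableSpace Ω] (μ : Measure Ω) [IsProbabilityMeasure μ]
    (n m : ℕ)
    (ε OPT E : ℝ) (hε : ε ∈ Set.Ioo (0 : ℝ) 1) (hOPT : 0 < OPT)
    (hE1 : (1 - ε) * OPT ≤ E) (hE2 : E ≤ OPT)
    (X : Fin n → Ω → ℝ)
    (hint : ∀ i, Integrable (X i) μ)
    (B : ℕ → Finset (Fin n))
    (hpart : ∀ i : Fin n, ∃! j, j ∈ Finset.Icc 1 m ∧ i ∈ B j)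
    (hmbound : (m : ℝ) ≤ 2 / ε + 1)
    (b g d : ℕ → ℝ)
    (hb1 : b 1 = 0) (hbtop : b (m + 1) = OPT)
    (hbmono : ∀ j ∈ Finset.Icc 1 m, b j ≤ b (j + 1))
    (hg : ∀ j ∈ Finset.Icc 1 m, max 0 (b j - ε ^ 2 * E) ≤ g j ∧ g j ≤ b j)
    (hd : ∀ j ∈ Finset.Icc 1 m, b (j + 1) - b j - ε ^ 2 * E ≤ d j ∧ d j ≤ b (j + 1) - b j)
    (hbucket : ∀ j ∈ Finset.Icc 1 m, (B j).card ≤ 1 ∨ d j ≤ ε * OPT)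
    (hload : ∀ j ∈ Finset.Icc 1 m,
      (1 - ε) * d j ≤ ∑ i ∈ B j, ∫ ω, max (X i ω - g j) 0 ∂μ)
    (σ : Equiv.Perm (Fin n))
    (β : Fin n → ℕ)
    (hβ : ∀ i : Fin n, β i ∈ Finset.Icc 1 m ∧ i ∈ B (β i))
    (horder : ∀ s t : Fin n, s ≤ t → β (σ t) ≤ β (σ s))
    (R : ℕ → ℝ)
    (hRn : R n = 0)
    (hR : ∀ t : Fin n, R (t : ℕ) = ∫ ω, max (X (σ t) ω) (R ((t : ℕ) + 1)) ∂μ)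
    : (1 - 7 * ε) * OPT ≤ R 0 := by
  obtain ⟨hε0, hε1⟩ := hε
  have hE0 : 0 ≤ E := le_trans (by nlinarith) hE1
  have hvalue := le_value_tailStart (δ := ε ^ 2 * E) (η := ε * OPT) hint hpart hβ
    (fun s t hst => horder s t hst) hRn hR hε0.le hε1.le (by positivity) (by positivity) hb1
    hbmono (fun j hj => (le_max_right _ _).trans (hg j hj).1) (fun j hj => (hd j hj).1) hbucket
    hload le_rfl
  rw [tailStart_eq_zero fun i => (mem_Icc.mp (hβ i).1).2, hbtop] at hvalue
  have hmε : ((m : ℝ) + 1) * ε ≤ 4 := by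
    have h := mul_le_mul_of_nonneg_right hmbound hε0.le
    rw [add_mul, div_mul_cancel₀ _ hε0.ne'] at h
    linarith
  have herror : ((m : ℝ) + 1) * (ε ^ 2 * E) ≤ 4 * (ε * OPT) :=
    calc ((m : ℝ) + 1) * (ε ^ 2 * E) = ((m + 1) * ε) * (ε * E) := by ring
      _ ≤ 4 * (ε * OPT) := mul_le_mul hmε (by gcongr) (by positivity) (by norm_num)
  linarith

/-- **Theorem 3, free-order prophets.**  In the bucketed free-order
prophets setup (buckets `B₁,…,B_m` listed by the permutation `σ` in reverse order,
base values `b`, guesses `g`, delta-guesses `d`, suffix values `R_t`), the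
optimal-stopping value of the permutation `σ` produced from the bucket assignment
satisfies `R₁ ≥ (1 − 7ε)·OPT`.  (Positions are 0-based: `R 0` is the paper's `R₁` and
`R n = 0` is the paper's `R_{n+1}`.) -/
theorem freeOrderProphets_value_guarantee
    {Ω : Type*} [MeasurableSpace Ω] (μ : Measure Ω) [IsProbabilityMeasure μ]
    (n m : ℕ) (hn : 0 < n) (hm : 1 ≤ m)
    (ε OPT E : ℝ) (hε : ε ∈ Set.Ioo (0 : ℝ) 1) (hOPT : 0 < OPT)
    (hE1 : (1 - ε) * OPT ≤ E) (hE2 : E ≤ OPT)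
    (X : Fin n → Ω → ℝ)
    (hmeas : ∀ i, Measurable (X i))
    (hint : ∀ i, Integrable (X i) μ)
    (hpos : ∀ i ω, 0 ≤ X i ω)
    (hindep : iIndepFun X μ)
    (B : ℕ → Finset (Fin n))
    (hpart : ∀ i : Fin n, ∃! j, j ∈ Finset.Icc 1 m ∧ i ∈ B j)
    (hmbound : (m : ℝ) ≤ 2 / ε + 1)
    (hB1 : (B 1).Nonempty)
    (b g d : ℕ → ℝ)
    (hb1 : b 1 = 0) (hbtop : b (m + 1) = OPT)
    (hbmono : ∀ j ∈ Finset.Icc 1 m, b j ≤ b (j + 1))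
    (hg : ∀ j ∈ Finset.Icc 1 m, max 0 (b j - ε ^ 2 * E) ≤ g j ∧ g j ≤ b j)
    (hd : ∀ j ∈ Finset.Icc 1 m, b (j + 1) - b j - ε ^ 2 * E ≤ d j ∧ d j ≤ b (j + 1) - b j)
    (hbucket : ∀ j ∈ Finset.Icc 1 m, (B j).card ≤ 1 ∨ d j ≤ ε * OPT)
    (hload : ∀ j ∈ Finset.Icc 1 m,
      (1 - ε) * d j ≤ ∑ i ∈ B j, ∫ ω, max (X i ω - g j) 0 ∂μ)
    (σ : Equiv.Perm (Fin n))
    (β : Fin n → ℕ)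
    (hβ : ∀ i : Fin n, β i ∈ Finset.Icc 1 m ∧ i ∈ B (β i))
    (horder : ∀ s t : Fin n, s ≤ t → β (σ t) ≤ β (σ s))
    (R : ℕ → ℝ)
    (hRn : R n = 0)
    (hR : ∀ t : Fin n, R (t : ℕ) = ∫ ω, max (X (σ t) ω) (R ((t : ℕ) + 1)) ∂μ)
    : (1 - 7 * ε) * OPT ≤ R 0 :=
  freeOrderProphets_value_guarantee_general μ n m ε OPT E hε hOPT hE1 hE2 X hint B hpart hmbound b g
    d hb1 hbtop hbmono hg hd hbucket hload σ β hβ horder R hRn hR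
end

section
/- Let X be an integrable real random variable, κ ∈ ℝ, and c = E[(X − κ)⁺]. Then for every real t ≤ κ: E[max{X, t}] − c = E[max{min{X, κ}, t}]. -/
open MeasureTheory

theorem max_min_eq_max_sub_max_sub_zero {α : Type*} [AddCommGroup α] [LinearOrder α]
    [IsOrderedAddMonoid α] {t κ : α} (x : α) (ht : t ≤ κ) :
    max (min x κ) t = max x t - max (x - κ) 0 := by
  rcases le_total x κ with hx | hx
  · simp [min_eq_left hx, max_eq_right (sub_nonpos.mpr hx)]
  · simp [min_eq_right hx, max_eq_left (sub_nonneg.mpr hx), max_eq_left ht,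
      max_eq_left (ht.trans hx)]

/-- Let `X` be an integrable real random variable, `κ ∈ ℝ`, and
`c = E[(X − κ)⁺]`.  Then for every real `t ≤ κ`:
`E[max{X, t}] − c = E[max{min{X, κ}, t}]`. -/
theorem weitzman_cap_identity {Ω : Type*} [MeasurableSpace Ω]
    (μ : Measure Ω) [IsProbabilityMeasure μ]
    (X : Ω → ℝ) (hX : Integrable X μ) (κ c t : ℝ)
    (hc : c = ∫ ω, max (X ω - κ) 0 ∂μ) (ht : t ≤ κ) :
    (∫ ω, max (X ω) t ∂μ) - c = ∫ ω, max (min (X ω) κ) t ∂μ := by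
  have h_max : Integrable (fun ω => max (X ω) t) μ := hX.sup (integrable_const t)
  have h_excess : Integrable (fun ω => max (X ω - κ) 0) μ :=
    (hX.sub (integrable_const κ)).sup (integrable_const 0)
  rw [hc, ← integral_sub h_max h_excess]
  simp_rw [max_min_eq_max_sub_max_sub_zero _ ht]
end

section
/- Let X₁,…,Xₙ be independent integrable real random variables, κ₁,…,κₙ ∈ ℝ, c_i = E[(X_i − κ_i)⁺], and thresholds t₁,…,tₙ with t_i ≤ κ_i for all i. Set Y_i = min{X_i, κ_i} and let τ = min{i ∈ {1,…,n} : X_i ≥ t_i}, with τ = n+1 if no such i exists (note X_i ≥ t_i iff Y_i ≥ t_i since t_i ≤ κ_i). Then E[X_τ·𝟙_{τ≤n}] − ∑_{i=1}^n c_i·P(τ ≥ i) = E[Y_τ·𝟙_{τ≤n}]. In words: the expected utility of the threshold policy in Pandora's Box with Commitment (value collected minus total probing costs paid) equals the expected value of the same threshold stopping rule applied to the capped variables Y_i in the Free-Order Prophets problem. -/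
/-!
Before stopping, every probed box has `X_i < t_i ≤ κ_i`, so `(X_i - κ_i)⁺ = 0`; at the stopping
box, `X_τ - min X_τ κ_τ = (X_τ - κ_τ)⁺`. Hence, pointwise,
`X_τ 𝟙_{τ<n} - Y_τ 𝟙_{τ<n} = ∑ᵢ (X_i - κ_i)⁺ 𝟙_{i ≤ τ}`.
The event `{i ≤ τ}` is decided by `X_0, …, X_{i-1}`, hence independent of `X_i`, so the `i`-th
summand has expectation `c_i P(τ ≥ i)`.
-/

open MeasureTheory ProbabilityTheory

/-- The stopping time of the threshold policy: the first (0-based) index `i < n` with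
`X_i ≥ t_i`, and `n` if no such index exists. -/
noncomputable def stopTime {Ω : Type*} {n : ℕ} (X : Fin n → Ω → ℝ)
    (t : Fin n → ℝ) (ω : Ω) : ℕ :=
  sInf {k : ℕ | k = n ∨ ∃ h : k < n, t ⟨k, h⟩ ≤ X ⟨k, h⟩ ω}

lemma sub_min_eq_max_sub_zero {α : Type*} [AddCommGroup α] [LinearOrder α]
    [IsOrderedAddMonoid α] (x k : α) : x - min x k = max (x - k) 0 := by
  rcases le_total x k with h | h <;> simp [h]

lemma dite_lt_eq_sum_indicator {Ω M : Type*} [AddCommMonoid M] {n : ℕ} (τ : Ω → ℕ)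
    (g : Fin n → Ω → M) (ω : Ω) :
    (if h : τ ω < n then g ⟨τ ω, h⟩ ω else 0)
      = ∑ i : Fin n, {ω | τ ω = i}.indicator (g i) ω := by
  split_ifs with h
  · rw [Finset.sum_eq_single_of_mem ⟨τ ω, h⟩ (Finset.mem_univ _)]
    · simp
    · intro i _ hi
      exact Set.indicator_of_notMem (fun hτ ↦ hi (Fin.ext hτ.symm)) _
  · refine (Finset.sum_eq_zero fun i _ ↦ Set.indicator_of_notMem ?_ _).symm
    rintro hτ
    exact h (Set.mem_ofPred.1 hτ ▸ i.isLt)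

lemma integrable_dite_lt {Ω : Type*} [MeasurableSpace Ω] {μ : Measure Ω} {n : ℕ} {τ : Ω → ℕ}
    (hτ : ∀ i : Fin n, MeasurableSet {ω | τ ω = i}) {g : Fin n → Ω → ℝ}
    (hg : ∀ i, Integrable (g i) μ) :
    Integrable (fun ω ↦ if h : τ ω < n then g ⟨τ ω, h⟩ ω else 0) μ := by
  simp_rw [dite_lt_eq_sum_indicator τ g]
  exact integrable_finsetSum _ fun i _ ↦ (hg i).indicator (hτ i)

section StopTime

variable {Ω : Type*} {n : ℕ} (X : Fin n → Ω → ℝ) (t : Fin n → ℝ)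

lemma stopTime_le (ω : Ω) : stopTime X t ω ≤ n :=
  Nat.sInf_le (Or.inl rfl)

lemma le_stopTime_iff {m : ℕ} (hm : m ≤ n) (ω : Ω) :
    m ≤ stopTime X t ω ↔ ∀ j : Fin n, (j : ℕ) < m → X j ω < t j := by
  refine ⟨fun h j hj ↦ ?_, fun h ↦ le_csInf ⟨n, Or.inl rfl⟩ ?_⟩
  · have hj' : (j : ℕ) ∉ {k : ℕ | k = n ∨ ∃ h : k < n, t ⟨k, h⟩ ≤ X ⟨k, h⟩ ω} :=
      Nat.notMem_of_lt_sInf (hj.trans_le h)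
    simp only [Set.mem_ofPred_eq, not_or, not_exists, not_le] at hj'
    exact hj'.2 j.isLt
  · rintro k (rfl | ⟨hk, hXk⟩)
    · exact hm
    · by_contra! hkm
      exact (h ⟨k, hk⟩ hkm).not_ge hXk

lemma lt_of_lt_stopTime {ω : Ω} {j : Fin n} (hj : (j : ℕ) < stopTime X t ω) : X j ω < t j :=
  (le_stopTime_iff X t (stopTime_le X t ω) ω).1 le_rfl j hj

lemma stopped_sub_stopped_min_eq_sum {κ : Fin n → ℝ} (ht : ∀ i, t i ≤ κ i) (ω : Ω) :
    (if h : stopTime X t ω < n then X ⟨stopTime X t ω, h⟩ ω else 0)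
      - (if h : stopTime X t ω < n then
          min (X ⟨stopTime X t ω, h⟩ ω) (κ ⟨stopTime X t ω, h⟩) else 0)
    = ∑ i : Fin n, {ω | (i : ℕ) ≤ stopTime X t ω}.indicator (fun ω ↦ max (X i ω - κ i) 0) ω := by
  have hstop : ((if h : stopTime X t ω < n then X ⟨stopTime X t ω, h⟩ ω else 0)
      - if h : stopTime X t ω < n then
          min (X ⟨stopTime X t ω, h⟩ ω) (κ ⟨stopTime X t ω, h⟩) else 0)
      = if h : stopTime X t ω < n then
          max (X ⟨stopTime X t ω, h⟩ ω - κ ⟨stopTime X t ω, h⟩) 0 else 0 := by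
    split_ifs <;> simp [sub_min_eq_max_sub_zero]
  rw [hstop, dite_lt_eq_sum_indicator (stopTime X t) (fun i ω ↦ max (X i ω - κ i) 0)]
  refine Finset.sum_congr rfl fun i _ ↦ ?_
  rcases lt_trichotomy (i : ℕ) (stopTime X t ω) with hlt | heq | hgt
  · have hpos : max (X i ω - κ i) 0 = 0 :=
      max_eq_right (by linarith [lt_of_lt_stopTime X t hlt, ht i])
    simp [Set.indicator_apply, hpos]
  · simp [heq]
  · simp [hgt.ne, hgt.not_ge]

lemma measurableSet_le_stopTime_comap {m : ℕ} (hm : m ≤ n) :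
    MeasurableSet[⨆ j ∈ {j : Fin n | (j : ℕ) < m}, MeasurableSpace.comap (X j) inferInstance]
      {ω | m ≤ stopTime X t ω} := by
  have h : {ω | m ≤ stopTime X t ω} = ⋂ j ∈ {j : Fin n | (j : ℕ) < m}, X j ⁻¹' Set.Iio (t j) := by
    ext ω
    simp [le_stopTime_iff X t hm]
  rw [h]
  refine .biInter (Set.to_countable _) fun j hj ↦ ?_
  exact le_iSup₂ (f := fun j (_ : j ∈ {j : Fin n | (j : ℕ) < m}) ↦
    MeasurableSpace.comap (X j) inferInstance) j hj _ ⟨_, measurableSet_Iio, rfl⟩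

variable [MeasurableSpace Ω]

lemma measurableSet_le_stopTime (hX : ∀ i, Measurable (X i)) {m : ℕ} (hm : m ≤ n) :
    MeasurableSet {ω | m ≤ stopTime X t ω} :=
  iSup₂_le (fun j _ ↦ (hX j).comap_le) _ (measurableSet_le_stopTime_comap X t hm)

lemma measurableSet_stopTime_eq (hX : ∀ i, Measurable (X i)) (i : Fin n) :
    MeasurableSet {ω | stopTime X t ω = i} := by
  have h : {ω | stopTime X t ω = i}
      = {ω | (i : ℕ) ≤ stopTime X t ω} \ {ω | (i : ℕ) + 1 ≤ stopTime X t ω} := by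
    ext ω
    simp only [Set.mem_ofPred_eq, Set.mem_sdiff, not_le]
    omega
  rw [h]
  exact (measurableSet_le_stopTime X t hX i.isLt.le).diff (measurableSet_le_stopTime X t hX i.isLt)

lemma setIntegral_le_stopTime_eq_mul {μ : Measure Ω} (hX : ∀ i, Measurable (X i))
    (hindep : iIndepFun X μ) (i : Fin n) {f : ℝ → ℝ} (hf : Measurable f) :
    ∫ ω in {ω | (i : ℕ) ≤ stopTime X t ω}, f (X i ω) ∂μ
      = μ.real {ω | (i : ℕ) ≤ stopTime X t ω} * ∫ ω, f (X i ω) ∂μ := by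
  have hpast_le : (⨆ j ∈ {j : Fin n | (j : ℕ) < i}, MeasurableSpace.comap (X j) inferInstance)
      ≤ ‹MeasurableSpace Ω› := iSup₂_le fun j _ ↦ (hX j).comap_le
  have hpast_indep : Indep (⨆ j ∈ {j : Fin n | (j : ℕ) < i},
      MeasurableSpace.comap (X j) inferInstance) (MeasurableSpace.comap (X i) inferInstance) μ := by
    simpa using indep_iSup_of_disjoint (fun j ↦ (hX j).comap_le) hindep.iIndep
      (S := {j | (j : ℕ) < i}) (T := {i}) (by simp)
  exact hpast_indep.setIntegral_eq_mul hpast_le (hX i).aemeasurable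
    (measurableSet_le_stopTime_comap X t i.isLt.le) hf.aestronglyMeasurable

end StopTime

/-- Let `X₁,…,Xₙ` be independent integrable random variables,
`κᵢ ∈ ℝ`, `cᵢ = E[(Xᵢ − κᵢ)⁺]`, and thresholds `tᵢ ≤ κᵢ`.  Let `Yᵢ = min{Xᵢ, κᵢ}` and
let `τ` be the first index with `Xᵢ ≥ tᵢ` (equal to `n` if none, in 0-based indexing).
Then `E[X_τ·𝟙_{τ<n}] − ∑ᵢ cᵢ·P(τ ≥ i) = E[Y_τ·𝟙_{τ<n}]`: the expected utility of the
threshold policy in Pandora's Box with Commitment equals the expected value of the same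
threshold stopping rule on the capped variables in the Free-Order Prophets problem. -/
theorem pandora_commitment_eq_capped_prophets {Ω : Type*} [MeasurableSpace Ω]
    (μ : Measure Ω) [IsProbabilityMeasure μ]
    (n : ℕ) (X : Fin n → Ω → ℝ)
    (hmeas : ∀ i, Measurable (X i)) (hint : ∀ i, Integrable (X i) μ)
    (hindep : iIndepFun X μ)
    (κ c t : Fin n → ℝ)
    (hc : ∀ i, c i = ∫ ω, max (X i ω - κ i) 0 ∂μ)
    (ht : ∀ i, t i ≤ κ i) :
    (∫ ω, (if h : stopTime X t ω < n then X ⟨stopTime X t ω, h⟩ ω else 0) ∂μ)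
      - ∑ i : Fin n, c i * (μ {ω | (i : ℕ) ≤ stopTime X t ω}).toReal
    = ∫ ω, (if h : stopTime X t ω < n then
        min (X ⟨stopTime X t ω, h⟩ ω) (κ ⟨stopTime X t ω, h⟩) else 0) ∂μ := by
  have hτ := measurableSet_stopTime_eq X t hmeas
  have hexcess : ∀ i, Integrable (fun ω ↦ max (X i ω - κ i) 0) μ :=
    fun i ↦ ((hint i).sub (integrable_const (κ i))).pos_part
  have hcapped : ∀ i, Integrable (fun ω ↦ min (X i ω) (κ i)) μ := fun i ↦ by
    convert (hint i).sub (hexcess i) using 1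
    ext ω
    simp [← sub_min_eq_max_sub_zero]
  rw [sub_eq_iff_eq_add', ← sub_eq_iff_eq_add, ← integral_sub (integrable_dite_lt hτ hint)
    (integrable_dite_lt hτ hcapped (g := fun i ω ↦ min (X i ω) (κ i)))]
  simp_rw [stopped_sub_stopped_min_eq_sum X t ht]
  rw [integral_finsetSum _ fun i _ ↦
    (hexcess i).indicator (measurableSet_le_stopTime X t hmeas i.isLt.le)]
  refine Finset.sum_congr rfl fun i _ ↦ ?_
  rw [integral_indicator (measurableSet_le_stopTime X t hmeas i.isLt.le),
    setIntegral_le_stopTime_eq_mul X t hmeas hindep i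
      (f := fun x ↦ max (x - κ i) 0) (by fun_prop), hc i, mul_comm, measureReal_def]
end

section
/- Let X₁,…,Xₙ be random variables each taking values in a finite set V = {v₁,…,v_M} ⊆ [0,∞), with p_{ij} = P(X_i = v_j). Fix S* ⊆ {1,…,n} and a positive integer r, and let M_r(S*) = max_{T ⊆ S*, |T| ≤ r} ∑_{i∈T} X_i denote the sum of the top r values among {X_i}_{i∈S*}. Then there exist reals y_{ij} ∈ [0,1] (1 ≤ i ≤ n, 1 ≤ j ≤ M) such that: y_{ij} = 0 whenever i ∉ S*; y_{ij} ≤ p_{ij} for all i, j; ∑_{i,j} y_{ij} ≤ r; and ∑_{i,j} y_{ij}·v_j = E[M_r(S*)]. In particular, the natural LP relaxation of Top-r ProbeMax has optimal value at least E[M_r(S*)]. -/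
/-!
Discretise `ω` into its index profile `c i = J i ω`, where `X i ω = v (J i ω)` with `J`
measurable; taking the least such index counts each outcome for one `j` only, even when `v`
repeats values. For each of the finitely many profiles fix a set `T c ⊆ S*` with `|T c| ≤ r`
realising the top-`r` sum, and put `y i j = P(i ∈ T(c(ω)), J i ω = j)`. Then for any weights
`w`, `∑ y i j * w i j = E[∑_{i ∈ T} w i (J i)]`: with `w = 1` this is `E|T| ≤ r`, and with
`w i j = v j` it is `E[M_r(S*)]`.
-/
open MeasureTheory

/-- `topRVal X S r ω` is the sum of the top `r` values among `{X i ω}_{i ∈ S}`,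
i.e. the maximum of `∑_{i ∈ T} X i ω` over subsets `T ⊆ S` with `|T| ≤ r`. -/
noncomputable def topRVal {Ω : Type*} {n : ℕ} (X : Fin n → Ω → ℝ)
    (S : Finset (Fin n)) (r : ℕ) (ω : Ω) : ℝ :=
  ((S.powerset.filter fun T => T.card ≤ r).image fun T => ∑ i ∈ T, X i ω).max'
    (Finset.image_nonempty.mpr ⟨∅, by simp⟩)

open Finset

theorem exists_measurable_index_eq {Ω α ι : Type*} [MeasurableSpace Ω] [MeasurableSpace α]
    [MeasurableSingletonClass α] [Fintype ι] [LinearOrder ι] [MeasurableSpace ι]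
    {f : Ω → α} (hf : Measurable f) (v : ι → α) (hfv : ∀ ω, ∃ j, f ω = v j) :
    ∃ g : Ω → ι, Measurable g ∧ ∀ ω, f ω = v (g ω) := by
  classical
  have hne (ω : Ω) : (univ.filter fun j => f ω = v j).Nonempty := by
    obtain ⟨j, hj⟩ := hfv ω
    exact ⟨j, by simpa using hj⟩
  refine ⟨fun ω => (univ.filter fun j => f ω = v j).min' (hne ω),
    measurable_to_countable' fun j => ?_, fun ω => by simpa using min'_mem _ (hne ω)⟩
  have hfv_eq (b : ι) : Measurable fun ω => f ω = v b :=
    measurableSet_setOfPred.mp (hf (measurableSet_singleton (v b)))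
  convert measurableSet_setOfPred.mpr ((hfv_eq j).and <|
    Measurable.forall fun b => (hfv_eq b).imp (measurable_const (a := j ≤ b))) using 1
  ext ω
  simp [min'_eq_iff]

theorem sum_measureReal_mul_eq_integral {Ω ι κ : Type*} [MeasurableSpace Ω] (μ : Measure Ω)
    [IsFiniteMeasure μ] [Fintype ι] [Fintype κ] (T : Ω → Finset ι) (J : ι → Ω → κ)
    (hA : ∀ i j, MeasurableSet {ω | i ∈ T ω ∧ J i ω = j}) (w : ι → κ → ℝ) :
    ∑ i, ∑ j, μ.real {ω | i ∈ T ω ∧ J i ω = j} * w i j =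
      ∫ ω, ∑ i ∈ T ω, w i (J i ω) ∂μ := by
  classical
  have hpt (ω : Ω) : ∑ i ∈ T ω, w i (J i ω) =
      ∑ i, ∑ j, {ω | i ∈ T ω ∧ J i ω = j}.indicator (fun _ => w i j) ω := by
    simp [Set.indicator_apply, ite_and, sum_ite_mem]
  have hint (i : ι) (j : κ) :
      Integrable ({ω | i ∈ T ω ∧ J i ω = j}.indicator fun _ => w i j) μ :=
    (integrable_const _).indicator (hA i j)
  simp_rw [hpt]
  rw [integral_finsetSum _ fun i _ => integrable_finsetSum _ fun j _ => hint i j]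
  refine sum_congr rfl fun i _ => ?_
  rw [integral_finsetSum _ fun j _ => hint i j]
  simp [integral_indicator_const _ (hA _ _)]

theorem exists_subset_sum_eq_topRVal {Ω : Type*} {n : ℕ} (X : Fin n → Ω → ℝ)
    (S : Finset (Fin n)) (r : ℕ) (ω : Ω) :
    ∃ T ⊆ S, T.card ≤ r ∧ ∑ i ∈ T, X i ω = topRVal X S r ω := by
  have hmem : topRVal X S r ω ∈
      (S.powerset.filter fun T => T.card ≤ r).image fun T => ∑ i ∈ T, X i ω := max'_mem _ _
  simp only [mem_image, mem_filter, mem_powerset] at hmem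
  obtain ⟨T, ⟨hTS, hTr⟩, hsum⟩ := hmem
  exact ⟨T, hTS, hTr, hsum⟩

theorem topR_probemax_lp_feasible_general {Ω : Type*} [MeasurableSpace Ω]
    (μ : Measure Ω) [IsProbabilityMeasure μ]
    (n M : ℕ) (X : Fin n → Ω → ℝ) (v : Fin M → ℝ)
    (hmeas : ∀ i, Measurable (X i))
    (hval : ∀ i ω, ∃ j, X i ω = v j)
    (Sstar : Finset (Fin n)) (r : ℕ) :
    ∃ y : Fin n → Fin M → ℝ,
      (∀ i j, 0 ≤ y i j ∧ y i j ≤ 1) ∧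
      (∀ i j, i ∉ Sstar → y i j = 0) ∧
      (∀ i j, y i j ≤ (μ {ω | X i ω = v j}).toReal) ∧
      (∑ i : Fin n, ∑ j : Fin M, y i j ≤ r) ∧
      (∑ i : Fin n, ∑ j : Fin M, y i j * v j = ∫ ω, topRVal X Sstar r ω ∂μ) := by
  choose J hJ hXJ using fun i => exists_measurable_index_eq (hmeas i) v (hval i)
  have hX : X = fun i ω => v (J i ω) := funext fun i => funext (hXJ i)
  choose Tsel hTS hTr hTsum using
    exists_subset_sum_eq_topRVal (fun i (c : Fin n → Fin M) => v (c i)) Sstar r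
  set T : Ω → Finset (Fin n) := fun ω => Tsel fun i => J i ω
  have hA (i : Fin n) (j : Fin M) : MeasurableSet {ω | i ∈ T ω ∧ J i ω = j} :=
    measurable_pi_lambda _ hJ (MeasurableSet.of_discrete (s := {c | i ∈ Tsel c ∧ c i = j}))
  have hsum := sum_measureReal_mul_eq_integral μ T J hA
  refine ⟨fun i j => μ.real {ω | i ∈ T ω ∧ J i ω = j},
    fun i j => ⟨measureReal_nonneg, measureReal_le_one⟩, ?_, ?_, ?_, ?_⟩
  · intro i j hi
    have hempty : {ω | i ∈ T ω ∧ J i ω = j} = ∅ :=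
      Set.eq_empty_of_forall_notMem fun ω hω => hi (hTS _ hω.1)
    simp only [hempty, measureReal_empty]
  · exact fun i j => measureReal_mono fun ω hω => (hXJ i ω).trans (congrArg v hω.2)
  · calc ∑ i, ∑ j, μ.real {ω | i ∈ T ω ∧ J i ω = j}
        = ∫ ω, ((T ω).card : ℝ) ∂μ := by simpa using hsum fun _ _ => 1
      _ ≤ ∫ _, (r : ℝ) ∂μ := integral_mono_of_nonneg (.of_forall fun _ => by positivity)
          (integrable_const _) (.of_forall fun _ => Nat.cast_le.mpr (hTr _))
      _ = r := by simp
  · -- `topRVal (fun i ω => v (J i ω)) Sstar r ω` unfolds to `topRVal` at the profile of `ω`.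
    rw [hsum fun _ j => v j, hX]
    exact integral_congr_ae (.of_forall fun ω => hTsum _)

/-- Let `X₁,…,Xₙ` take values in a finite set `V = {v₁,…,v_M} ⊆ [0,∞)`,
with `p_{ij} = P(Xᵢ = vⱼ)`.  Fix `S* ⊆ {1,…,n}` and `r ≥ 1`, and let `M_r(S*)` be the sum
of the top `r` values among `{Xᵢ}_{i∈S*}`.  Then there exist reals `y_{ij} ∈ [0,1]` with
`y_{ij} = 0` for `i ∉ S*`, `y_{ij} ≤ p_{ij}`, `∑ y_{ij} ≤ r`, and
`∑ y_{ij} vⱼ = E[M_r(S*)]`; in particular the natural LP relaxation of Top-r ProbeMax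
has optimal value at least `E[M_r(S*)]`. -/
theorem topR_probemax_lp_feasible {Ω : Type*} [MeasurableSpace Ω]
    (μ : Measure Ω) [IsProbabilityMeasure μ]
    (n M : ℕ) (X : Fin n → Ω → ℝ) (v : Fin M → ℝ)
    (hv : ∀ j, 0 ≤ v j)
    (hmeas : ∀ i, Measurable (X i))
    (hval : ∀ i ω, ∃ j, X i ω = v j)
    (Sstar : Finset (Fin n)) (r : ℕ) (hr : 0 < r) :
    ∃ y : Fin n → Fin M → ℝ,
      (∀ i j, 0 ≤ y i j ∧ y i j ≤ 1) ∧
      (∀ i j, i ∉ Sstar → y i j = 0) ∧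
      (∀ i j, y i j ≤ (μ {ω | X i ω = v j}).toReal) ∧
      (∑ i : Fin n, ∑ j : Fin M, y i j ≤ r) ∧
      (∑ i : Fin n, ∑ j : Fin M, y i j * v j = ∫ ω, topRVal X Sstar r ω ∂μ) :=
  topR_probemax_lp_feasible_general μ n M X v hmeas hval Sstar r
end
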